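/- arXiv:2605.12337 — 4 statements merged into one kernel-verified Lean document; each statement's English description precedes it below -/
import Mathlib

section
/- (1) If a structure N locally trace defines a structure M, then local trace definability of M in N can be witnessed by a collection of at most |Th(M)| functions M → N. (2) If some model of a theory T is locally trace definable in a model of a theory T* via κ functions, then every model of T is locally trace definable in some model of T* via κ functions. (3) If a structure M₁ is locally trace definable in a structure M₂ via κ functions and M₂ is locally trace definable in a structure M₃ via η functions, then M₁ is locally trace definable in M₃ via κ·η functions. -/
/-!
(1) Parameters can be substituted as constants into the definable subset of `N`, so only the
parameter-free formulas of `M` need witnesses, and one witness for each of the `|L| + ℵ₀` such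
formulas suffices. (3) Composing the witnessing functions composes the traces.

(2) A witness `E₀` of `M₀` in `N₀` presents every formula `φ(x)` of `M₀` as
`ψ(f_{e 1}(x_{j 1}), …, f_{e d}(x_{j d}), c)` with a fixed shape `(e, j, ψ)`. Let `M ≡ M₀`. Name
the values `f_i(x)` (`i ∈ E₀`, `x ∈ M`) and the parameters `c` by new constants; that `M` is
presented with the same shapes is then a set of sentences, which together with `Th(N₀)` is finitely
satisfiable in `N₀`, because finitely many tuples of `M` can be moved to `M₀` preserving their
formulas. Compactness gives `N ≡ N₀` in which `M` has a witness indexed by `E₀`.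
-/

open FirstOrder Language Set Cardinal

namespace TracePaper

/-- First-order languages with symbols in `Type 0`. -/
abbrev Lang := FirstOrder.Language.{0,0}

/-- A set is definable with parameters (i.e. over the full domain). -/
def Dfn (L : Lang) (M : Type) [L.Structure M] {α : Type} (s : Set (α → M)) : Prop :=
  Set.Definable (Set.univ : Set M) L s

/-- A set is definable without parameters. -/
def Dfn0 (L : Lang) (M : Type) [L.Structure M] {α : Type} (s : Set (α → M)) : Prop :=
  Set.Definable (∅ : Set M) L s

/-- `N` trace defines `M` via the injection `τ : M → N^n`. -/
def TraceVia (L₁ : Lang) (N : Type) [L₁.Structure N]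
    (L₂ : Lang) (M : Type) [L₂.Structure M] {n : ℕ} (τ : M → Fin n → N) : Prop :=
  ∀ (m : ℕ) (X : Set (Fin m → M)), Dfn L₂ M X →
    ∃ Y : Set (Fin m × Fin n → N), Dfn L₁ N Y ∧
      X = {a | (fun p : Fin m × Fin n => τ (a p.1) p.2) ∈ Y}

/-- The structure `N` trace defines the structure `M`. -/
def Traces (L₁ : Lang) (N : Type) [L₁.Structure N]
    (L₂ : Lang) (M : Type) [L₂.Structure M] : Prop :=
  ∃ (n : ℕ) (τ : M → Fin n → N), 0 < n ∧ Function.Injective τ ∧ TraceVia L₁ N L₂ M τ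

/-- The collection `E` of functions witnesses local trace definability of `M` in `N`. -/
def LocalWitness (L₁ : Lang) (N : Type) [L₁.Structure N]
    (L₂ : Lang) (M : Type) [L₂.Structure M] (E : Set (M → N)) : Prop :=
  ∀ (m : ℕ) (X : Set (Fin m → M)), Dfn L₂ M X →
    ∃ (d : ℕ) (τ : Fin d → M → N) (j : Fin d → Fin m) (Y : Set (Fin d → N)),
      (∀ t, τ t ∈ E) ∧ Dfn L₁ N Y ∧
      X = {a | (fun t => τ t (a (j t))) ∈ Y}

/-- The structure `N` locally trace defines the structure `M`. -/
def LocTraces (L₁ : Lang) (N : Type) [L₁.Structure N]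
    (L₂ : Lang) (M : Type) [L₂.Structure M] : Prop :=
  ∃ E : Set (M → N), LocalWitness L₁ N L₂ M E

/-- `N` locally trace defines `M` via (at most) `κ` functions. -/
def LocTracesVia (L₁ : Lang) (N : Type) [L₁.Structure N]
    (L₂ : Lang) (M : Type) [L₂.Structure M] (κ : Cardinal.{0}) : Prop :=
  ∃ E : Set (M → N), #E ≤ κ ∧ LocalWitness L₁ N L₂ M E

/-- The theory `T₁` trace defines the theory `T₂`: some model of `T₂` is trace
definable in some model of `T₁`. -/
def TTraces (L₁ : Lang) (T₁ : L₁.Theory) (L₂ : Lang) (T₂ : L₂.Theory) : Prop :=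
  ∃ (N : Type) (S₁ : L₁.Structure N) (M : Type) (S₂ : L₂.Structure M),
    Infinite N ∧ Infinite M ∧ @Theory.Model L₁ N S₁ T₁ ∧ @Theory.Model L₂ M S₂ T₂ ∧
      @Traces L₁ N S₁ L₂ M S₂

/-- Trace equivalence of theories. -/
def TTraceEquiv (L₁ : Lang) (T₁ : L₁.Theory) (L₂ : Lang) (T₂ : L₂.Theory) :
    Prop :=
  TTraces L₁ T₁ L₂ T₂ ∧ TTraces L₂ T₂ L₁ T₁

/-- The theory `T₁` locally trace defines the theory `T₂`. -/
def TLocTraces (L₁ : Lang) (T₁ : L₁.Theory) (L₂ : Lang) (T₂ : L₂.Theory) :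
    Prop :=
  ∃ (N : Type) (S₁ : L₁.Structure N) (M : Type) (S₂ : L₂.Structure M),
    Infinite N ∧ Infinite M ∧ @Theory.Model L₁ N S₁ T₁ ∧ @Theory.Model L₂ M S₂ T₂ ∧
      @LocTraces L₁ N S₁ L₂ M S₂

/-- The theory `T₁` locally trace defines the theory `T₂` via at most `κ` functions. -/
def TLocTracesVia (L₁ : Lang) (T₁ : L₁.Theory) (L₂ : Lang) (T₂ : L₂.Theory)
    (κ : Cardinal.{0}) : Prop :=
  ∃ (N : Type) (S₁ : L₁.Structure N) (M : Type) (S₂ : L₂.Structure M),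
    Infinite N ∧ Infinite M ∧ @Theory.Model L₁ N S₁ T₁ ∧ @Theory.Model L₂ M S₂ T₂ ∧
      @LocTracesVia L₁ N S₁ L₂ M S₂ κ

/-- Local trace equivalence of theories. -/
def TLocTraceEquiv (L₁ : Lang) (T₁ : L₁.Theory) (L₂ : Lang)
    (T₂ : L₂.Theory) : Prop :=
  TLocTraces L₁ T₁ L₂ T₂ ∧ TLocTraces L₂ T₂ L₁ T₁

/-- A theory is trace maximal if it trace defines every (infinite) structure. -/
def TraceMaximal (L₁ : Lang) (T₁ : L₁.Theory) : Prop :=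
  ∀ (L₂ : Lang) (M : Type) (S₂ : L₂.Structure M), Infinite M →
    TTraces L₁ T₁ L₂ (@Language.completeTheory L₂ M S₂)

section DLang

/-- The relational language coding the function symbols of `L`: an `n`-ary function symbol
becomes an `(n+1)`-ary relation symbol (its graph). -/
def funRelLang (L : Lang) : Lang where
  Functions := fun _ => Empty
  Relations := fun n => match n with
    | 0 => Empty
    | (m+1) => L.Functions m

/-- The language consisting of the relation symbols of `L`. -/
def relLang (L : Lang) : Lang where
  Functions := fun _ => Empty
  Relations := L.Relations

/-- The language with a unary sort predicate (for the first sort `P`) and a binary relation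
symbol for (the graph of) each projection `π_i`, `i : ι`. -/
def projLang (ι : Type) : Lang where
  Functions := fun _ => Empty
  Relations := fun n => match n with
    | 1 => Unit
    | 2 => ι
    | _ => Empty

/-- The (relational) one-sorted language coding the two-sorted structures
`(P, 𝔐, (π_i)_{i : ι})`. -/
def DLang (L : Lang) (ι : Type) : Lang :=
  (funRelLang L).sum ((relLang L).sum (projLang ι))

variable {L : Lang} {ι P M : Type}

/-- Interpretation of the graph-relations of the function symbols of `L` on `P ⊕ M`. -/
def funRelInterp (L : Lang) (P M : Type) [L.Structure M] :
    ∀ {n : ℕ}, (funRelLang L).Relations n → (Fin n → P ⊕ M) → Prop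
  | 0, r, _ => Empty.elim r
  | (m+1), g, x =>
      ∃ a : Fin m → M, (∀ i : Fin m, x i.castSucc = Sum.inr (a i)) ∧
        x (Fin.last m) = Sum.inr (Structure.funMap g a)

/-- Interpretation of the sort predicate and the projection graphs on `P ⊕ M`. -/
def projInterp (π : ι → P → M) :
    ∀ {n : ℕ}, (projLang ι).Relations n → (Fin n → P ⊕ M) → Prop
  | 0, r, _ => Empty.elim r
  | 1, _, x => ∃ p : P, x 0 = Sum.inl p
  | 2, i, x => ∃ p : P, x 0 = Sum.inl p ∧ x 1 = Sum.inr (π i p)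
  | (_+3), r, _ => Empty.elim r

/-- The one-sorted structure on `P ⊕ M` coding the two-sorted structure `(P, 𝔐, (π_i))`. -/
def dStructure (L : Lang) (ι P M : Type) [L.Structure M] (π : ι → P → M) :
    (DLang L ι).Structure (P ⊕ M) where
  funMap := fun {_} f _ => (Sum.elim Empty.elim (Sum.elim Empty.elim Empty.elim)) f
  RelMap := fun {n} r x =>
    Sum.elim (fun g => funRelInterp L P M g x)
      (Sum.elim
        (fun s => ∃ a : Fin n → M, (∀ i, x i = Sum.inr (a i)) ∧
          Structure.RelMap (L := L) (M := M) (show L.Relations n from s) a)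
        (fun t => projInterp π t x)) r

/-- The canonical structure coding `(M^ι, 𝔐, (π_i)_{i : ι})`. -/
def canonD (L : Lang) (ι M : Type) [L.Structure M] :
    (DLang L ι).Structure ((ι → M) ⊕ M) :=
  dStructure L ι (ι → M) M (fun i x => x i)

/-- The theory `D^κ(T)` where `κ = #ι` and `T = Th(M)`: the complete theory of the
(coded) two-sorted structure `(M^ι, 𝔐, (π_i)_{i : ι})`. -/
def DTheory (L : Lang) (ι M : Type) [L.Structure M] : (DLang L ι).Theory :=
  @Language.completeTheory (DLang L ι) ((ι → M) ⊕ M) (canonD L ι M)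

/-- The genericity axioms for `(P, 𝔐, (π_i))`: any finite, pairwise-distinctly-indexed
tuple of values is realized by at least `m` elements of `P`, for every `m`. -/
def Generic {ι P M : Type} (π : ι → P → M) : Prop :=
  ∀ (n : ℕ) (idx : Fin n → ι), Function.Injective idx →
    ∀ (a : Fin n → M) (m : ℕ), ∃ S : Finset P, m ≤ S.card ∧
      ∀ p ∈ S, ∀ k : Fin n, π (idx k) p = a k

end DLang

abbrev FinFormula (L : Lang) : Type := Σ m : ℕ, L.Formula (Fin m)

theorem card_finFormula_le (L : Lang) : #(FinFormula L) ≤ L.card + ℵ₀ := by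
  have hℵ₀ : ℵ₀ ≤ L.card + ℵ₀ := self_le_add_left _ _
  have hform (m : ℕ) : #(L.Formula (Fin m)) ≤ L.card + ℵ₀ := by
    refine (mk_le_of_injective (f := Sigma.mk 0) sigma_mk_injective).trans
      (BoundedFormula.card_le.trans ?_)
    simp only [lift_id, mk_fin]
    rw [add_comm (m : Cardinal)]
    exact max_le hℵ₀ (add_le_add_right (natCast_lt_aleph0 (n := m)).le _)
  calc #(FinFormula L) ≤ sum fun _ : ℕ => L.card + ℵ₀ :=
        (mk_sigma _).trans_le (sum_le_sum _ _ hform)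
    _ = L.card + ℵ₀ := by rw [sum_const', mk_nat, aleph0_mul_eq hℵ₀]

section Definability

variable {L : Lang} {M : Type} [L.Structure M]

theorem dfn_setOf_realize {α : Type} (φ : L.Formula α) : Dfn L M {v | φ.Realize v} :=
  (Set.empty_definable_iff.2 ⟨φ, rfl⟩).mono (Set.empty_subset _)

theorem dfn_setOf_realize_sum_elim {α : Type} {k : ℕ} (ψ : L.Formula (α ⊕ Fin k))
    (b : Fin k → M) : Dfn L M {v : α → M | ψ.Realize (Sum.elim v b)} := by
  refine Set.definable_iff_exists_formula_sum.2
    ⟨ψ.relabel (Sum.elim Sum.inr fun s => Sum.inl ⟨b s, Set.mem_univ _⟩), ?_⟩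
  ext v
  simp only [Set.mem_ofPred_eq, Formula.realize_relabel]
  exact iff_of_eq (congrArg _ (funext fun x => by rcases x with a | s <;> rfl))

theorem Dfn.exists_formula_sum_fin {α : Type} {X : Set (α → M)} (h : Dfn L M X) :
    ∃ (k : ℕ) (ψ : L.Formula (α ⊕ Fin k)) (b : Fin k → M),
      X = {v | ψ.Realize (Sum.elim v b)} := by
  obtain ⟨A, -, hA⟩ := Set.definable_iff_finitely_definable.1 h
  obtain ⟨φ, rfl⟩ := Set.definable_iff_exists_formula_sum.1 hA
  obtain ⟨k, ⟨e⟩⟩ := Finite.exists_equiv_fin (A : Set M)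
  refine ⟨k, φ.relabel (Sum.elim (fun c => Sum.inr (e c)) Sum.inl),
    fun s => (e.symm s : M), ?_⟩
  ext v
  simp only [Set.mem_ofPred_eq, Formula.realize_relabel]
  refine iff_of_eq (congrArg _ (funext fun x => ?_))
  rcases x with c | a
  · simp
  · rfl

theorem Dfn.preimage_sum_elim {α β : Type} [Finite α] {Y : Set (α → M)} (hY : Dfn L M Y)
    (g : α → β ⊕ M) : Dfn L M {y : β → M | (fun t => Sum.elim y id (g t)) ∈ Y} := by
  refine Set.Definable.preimage_map (fun t => ?_) hY
  rcases g t with s | c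
  · exact Set.DefinableFun.proj L
  · exact L.definableFun_const _ (Set.mem_univ c)

end Definability

section LocalWitness

variable {L₁ L₂ : Lang} {N M : Type} [L₁.Structure N] [L₂.Structure M]

theorem localWitness_of_forall_formula {E : Set (M → N)}
    (hE : ∀ (m : ℕ) (φ : L₂.Formula (Fin m)),
      ∃ (d : ℕ) (τ : Fin d → M → N) (j : Fin d → Fin m) (Y : Set (Fin d → N)),
        (∀ t, τ t ∈ E) ∧ Dfn L₁ N Y ∧ {v | φ.Realize v} = {a | (fun t => τ t (a (j t))) ∈ Y}) :
    LocalWitness L₁ N L₂ M E := by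
  intro m X hX
  cases m with
  | zero =>
    refine ⟨0, Fin.elim0, Fin.elim0, {_y : Fin 0 → N | (Fin.elim0 : Fin 0 → M) ∈ X},
      fun t => t.elim0, ?_, ?_⟩
    · by_cases h : (Fin.elim0 : Fin 0 → M) ∈ X <;> simp only [h, ofPred_true, ofPred_false]
      exacts [Set.definable_univ, Set.definable_empty]
    · ext a
      rw [Subsingleton.elim a Fin.elim0]
      rfl
  | succ m =>
    obtain ⟨k, ψ, b, rfl⟩ := hX.exists_formula_sum_fin
    obtain ⟨d, τ, j, Y, hτ, hY, hψ⟩ := hE _ (ψ.relabel finSumFinEquiv)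
    -- coordinates `t` with `j t` among the parameters are frozen to the constants `τ t (b i)`
    refine ⟨d, τ, fun t => (finSumFinEquiv.symm (j t)).elim id fun _ => 0,
      {y | (fun t => Sum.elim y id ((finSumFinEquiv.symm (j t)).elim (fun _ => Sum.inl t)
        fun i => Sum.inr (τ t (b i)))) ∈ Y}, hτ, hY.preimage_sum_elim _, ?_⟩
    ext a
    have ha := Set.ext_iff.1 hψ (Sum.elim a b ∘ finSumFinEquiv.symm)
    simp only [mem_ofPred_eq, Formula.realize_relabel, Function.comp_assoc,
      Equiv.symm_comp_self, Function.comp_id] at ha ⊢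
    rw [ha]
    refine iff_of_eq (congrArg (· ∈ Y) (funext fun t => ?_))
    rcases h : finSumFinEquiv.symm (j t) with i | i <;> simp [h]

theorem LocalWitness.exists_card_le {E : Set (M → N)} (hE : LocalWitness L₁ N L₂ M E) :
    ∃ E' : Set (M → N), #E' ≤ L₂.card + ℵ₀ ∧ LocalWitness L₁ N L₂ M E' := by
  choose d τ j Y _ hY hτY using
    fun p : FinFormula L₂ => hE p.1 _ (dfn_setOf_realize (M := M) p.2)
  refine ⟨range fun x : Σ p, Fin (d p) => τ x.1 x.2, ?_, localWitness_of_forall_formula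
    fun m φ => ⟨_, τ ⟨m, φ⟩, j ⟨m, φ⟩, Y ⟨m, φ⟩, fun t => ⟨⟨⟨m, φ⟩, t⟩, rfl⟩, hY _, hτY ⟨m, φ⟩⟩⟩
  have hℵ₀ : ℵ₀ ≤ L₂.card + ℵ₀ := self_le_add_left _ _
  calc #(range _) ≤ #(Σ p, Fin (d p)) := mk_range_le
    _ ≤ sum fun _ : FinFormula L₂ => ℵ₀ :=
      (mk_sigma _).trans_le (sum_le_sum _ _ fun p => (mk_fin _ ▸ natCast_lt_aleph0).le)
    _ ≤ L₂.card + ℵ₀ := by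
      rw [sum_const']
      exact (mul_le_mul_left (card_finFormula_le L₂) ℵ₀).trans (mul_aleph0_eq hℵ₀).le

theorem LocalWitness.comp {L₃ : Lang} {K : Type} [L₃.Structure K] {E : Set (M → N)}
    {F : Set (N → K)} (hE : LocalWitness L₁ N L₂ M E) (hF : LocalWitness L₃ K L₁ N F) :
    LocalWitness L₃ K L₂ M (image2 (fun τ σ => σ ∘ τ) E F) := by
  intro m X hX
  obtain ⟨d, τ, j, Y, hτ, hY, rfl⟩ := hE m X hX
  obtain ⟨d', σ, j', Z, hσ, hZ, hYZ⟩ := hF d Y hY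
  refine ⟨d', fun s => σ s ∘ τ (j' s), fun s => j (j' s), Z,
    fun s => mem_image2_of_mem (hτ (j' s)) (hσ s), hZ, ?_⟩
  ext a
  exact Set.ext_iff.1 hYZ fun t => τ t (a (j t))

theorem LocTracesVia.trans {L₃ : Lang} {K : Type} [L₃.Structure K] {κ η : Cardinal}
    (hNM : LocTracesVia L₁ N L₂ M κ) (hKN : LocTracesVia L₃ K L₁ N η) :
    LocTracesVia L₃ K L₂ M (κ * η) := by
  obtain ⟨E, hEκ, hE⟩ := hNM
  obtain ⟨F, hFη, hF⟩ := hKN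
  exact ⟨_, mk_image2_le.trans (mul_le_mul' hEκ hFη), hE.comp hF⟩

end LocalWitness

/-- The shape of a presentation `φ(x) ↔ ψ(f (e 1) (x (j 1)), …, f (e d) (x (j d)), c)` of an
`m`-ary formula `φ`, with the maps `f : ι → M → N` and the parameters `c : Fin k → N` left open. -/
structure TracePattern (ι : Type) (L : Lang) (m : ℕ) where
  d : ℕ
  e : Fin d → ι
  j : Fin d → Fin m
  k : ℕ
  ψ : L.Formula (Fin d ⊕ Fin k)

section TracePattern

variable {L₁ L₂ : Lang} {N M : Type} [L₁.Structure N] [L₂.Structure M] {ι : Type}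

def TracePattern.Presents {m : ℕ} (P : TracePattern ι L₁ m) (f : ι → M → N) (c : Fin P.k → N)
    (φ : L₂.Formula (Fin m)) : Prop :=
  ∀ a : Fin m → M, φ.Realize a ↔ P.ψ.Realize (Sum.elim (fun t => f (P.e t) (a (P.j t))) c)

theorem LocalWitness.exists_presents {E : Set (M → N)} (hE : LocalWitness L₁ N L₂ M E) {m : ℕ}
    (φ : L₂.Formula (Fin m)) :
    ∃ (P : TracePattern E L₁ m) (c : Fin P.k → N), P.Presents (fun τ => τ.1) c φ := by
  obtain ⟨d, τ, j, Y, hτ, hY, hφ⟩ := hE m _ (dfn_setOf_realize φ)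
  obtain ⟨k, ψ, c, rfl⟩ := hY.exists_formula_sum_fin
  exact ⟨⟨d, fun t => ⟨τ t, hτ t⟩, j, k, ψ⟩, c, Set.ext_iff.1 hφ⟩

theorem localWitness_range_of_presents {f : ι → M → N}
    (hf : ∀ (m : ℕ) (φ : L₂.Formula (Fin m)),
      ∃ (P : TracePattern ι L₁ m) (c : Fin P.k → N), P.Presents f c φ) :
    LocalWitness L₁ N L₂ M (range f) :=
  localWitness_of_forall_formula fun m φ => by
    obtain ⟨P, c, hP⟩ := hf m φ
    exact ⟨P.d, fun t => f (P.e t), P.j, _, fun t => mem_range_self _,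
      dfn_setOf_realize_sum_elim P.ψ c, Set.ext hP⟩

end TracePattern

theorem _root_.FirstOrder.Language.ElementarilyEquivalent.exists_realize {L : Language}
    {M M' : Type*} [L.Structure M] [L.Structure M'] [Nonempty M'] (h : M ≅[L] M') {α : Type*}
    {φ : L.Formula α} {v : α → M} (hv : φ.Realize v) : ∃ v' : α → M', φ.Realize v' := by
  classical
  have hM : M ⊨ φ.exClosure := (Formula.realize_exClosure φ).2
    ⟨fun a => v a, (BoundedFormula.realize_restrictFreeVar (f := id) v fun _ => rfl).2 hv⟩
  obtain ⟨w, hw⟩ := (Formula.realize_exClosure φ).1 ((h.realize_sentence _).1 hM)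
  exact ⟨fun a => if ha : a ∈ φ.freeVarFinset then w ⟨a, ha⟩ else Classical.arbitrary M',
    (BoundedFormula.realize_restrictFreeVar _ fun a => by simp).1 hw⟩

theorem _root_.FirstOrder.Language.ElementarilyEquivalent.exists_realize_iff {L : Language}
    {M M' : Type*} [L.Structure M] [L.Structure M'] [Nonempty M'] (h : M ≅[L] M')
    {α β : Type*} [Finite β] (φ : β → L.Formula α) (v : α → M) :
    ∃ v' : α → M', ∀ b, (φ b).Realize v' ↔ (φ b).Realize v := by
  classical
  let χ : β → L.Formula α := fun b => if (φ b).Realize v then φ b else (φ b).not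
  obtain ⟨v', hv'⟩ := h.exists_realize (φ := Formula.iInf χ) (v := v) <|
    Formula.realize_iInf.2 fun b => by by_cases hb : (φ b).Realize v <;> simp [χ, hb]
  refine ⟨v', fun b => ?_⟩
  have hχ := Formula.realize_iInf.1 hv' b
  by_cases hb : (φ b).Realize v <;> simp_all [χ]

theorem realize_ite_not {L : Language} {K : Type*} [L.Structure K] (P : Prop) [Decidable P]
    (σ : L.Sentence) : K ⊨ (if P then σ else σ.not) ↔ (P ↔ K ⊨ σ) := by
  by_cases hP : P <;> simp [hP]

section Compactness

variable {L₁ L₂ : Lang} {ι : Type} (P : ∀ p : FinFormula L₂, TracePattern ι L₁ p.1)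
  (M : Type) [L₂.Structure M]

/-- `(i, x)` names `f i x`, and `⟨p, s⟩` names the parameter `c p s` of the presentation of `p`. -/
abbrev PatternConst : Type := (ι × M) ⊕ Σ p : FinFormula L₂, Fin (P p).k

open Classical in
noncomputable def patternSentence (g : Σ p : FinFormula L₂, Fin p.1 → M) :
    L₁[[PatternConst P M]].Sentence :=
  let σ := Formula.equivSentence <| (P g.1).ψ.relabel <|
    Sum.elim (fun t => Sum.inl ((P g.1).e t, g.2 ((P g.1).j t))) fun s => Sum.inr ⟨g.1, s⟩
  if g.1.2.Realize g.2 then σ else σ.not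

variable {P M}

theorem realize_patternSentence {K : Type} [L₁.Structure K] [L₁[[PatternConst P M]].Structure K]
    [(L₁.lhomWithConstants (PatternConst P M)).IsExpansionOn K] {p : FinFormula L₂}
    (a : Fin p.1 → M) :
    K ⊨ patternSentence P M ⟨p, a⟩ ↔ (p.2.Realize a ↔ (P p).ψ.Realize (Sum.elim
      (fun t => (L₁.con (Sum.inl ((P p).e t, a ((P p).j t)) : PatternConst P M) : K))
      fun s => L₁.con (Sum.inr ⟨p, s⟩ : PatternConst P M))) := by
  classical
  rw [patternSentence, realize_ite_not, Formula.realize_equivSentence, Formula.realize_relabel]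
  exact iff_of_eq (congrArg _ (congrArg _ (funext fun x => by rcases x with t | s <;> rfl)))

variable {N₀ M₀ : Type} [L₁.Structure N₀] [L₂.Structure M₀]

theorem isSatisfiable_patternTheory [Nonempty N₀] [Nonempty M₀] (hM : M ≅[L₂] M₀)
    {f₀ : ι → M₀ → N₀} {c₀ : ∀ p, Fin (P p).k → N₀} (h₀ : ∀ p, (P p).Presents f₀ (c₀ p) p.2) :
    Theory.IsSatisfiable (⋃ G : Finset (Σ p : FinFormula L₂, Fin p.1 → M),
      (L₁.lhomWithConstants (PatternConst P M)).onTheory (L₁.completeTheory N₀) ∪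
        patternSentence P M '' G) := by
  refine (Theory.isSatisfiable_directed_union_iff <| Monotone.directed_le fun G G' hG =>
    union_subset_union_right _ (image_mono (Finset.coe_subset.2 hG))).2 fun G => ?_
  -- read the finitely many tuples of `G` in `M₀` through a map `h` preserving their formulas
  obtain ⟨h, hh⟩ := hM.exists_realize_iff (fun g : G => g.1.1.2.relabel g.1.2) id
  let _ : (constantsOn (PatternConst P M)).Structure N₀ :=
    constantsOn.structure (Sum.elim (fun x => f₀ x.1 (h x.2)) fun y => c₀ y.1 y.2)
  have hG : N₀ ⊨ patternSentence P M '' G := (Theory.model_iff _).2 <| by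
    rintro _ ⟨⟨p, a⟩, hg, rfl⟩
    have hpa := hh ⟨⟨p, a⟩, hg⟩
    simp only [Formula.realize_relabel, Function.id_comp] at hpa
    exact (realize_patternSentence a).2 (hpa.symm.trans (h₀ p (h ∘ a)))
  have : N₀ ⊨ (L₁.lhomWithConstants (PatternConst P M)).onTheory (L₁.completeTheory N₀) ∪
      patternSentence P M '' G :=
    Theory.model_union_iff.2 ⟨(LHom.onTheory_model _ _).2 inferInstance, hG⟩
  exact ⟨.of _ N₀⟩

theorem TracePattern.exists_presents_of_elementarilyEquivalent [Nonempty N₀] [Nonempty M₀]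
    (hM : M ≅[L₂] M₀) {f₀ : ι → M₀ → N₀} {c₀ : ∀ p, Fin (P p).k → N₀}
    (h₀ : ∀ p, (P p).Presents f₀ (c₀ p) p.2) :
    ∃ (N : Type) (_ : L₁.Structure N), (N ≅[L₁] N₀) ∧
      ∃ (f : ι → M → N) (c : ∀ p, Fin (P p).k → N), ∀ p, (P p).Presents f (c p) p.2 := by
  obtain ⟨K⟩ := isSatisfiable_patternTheory hM h₀
  let _ : L₁.Structure K := (L₁.lhomWithConstants (PatternConst P M)).reduct K
  have hK : K ⊨ L₁.completeTheory N₀ := (LHom.onTheory_model _ _).1 <|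
    K.is_model.mono (subset_iUnion_of_subset ∅ subset_union_left)
  refine ⟨K, _, elementarilyEquivalent_iff.2 (realize_iff_of_model_completeTheory N₀ K),
    fun i x => (L₁.con (Sum.inl (i, x) : PatternConst P M) : K),
    fun p s => (L₁.con (Sum.inr ⟨p, s⟩ : PatternConst P M) : K),
    fun p a => (realize_patternSentence a).1 (K.is_model.realize_of_mem _ ?_)⟩
  exact mem_iUnion.2 ⟨{⟨p, a⟩}, Or.inr ⟨_, Finset.mem_coe.2 (Finset.mem_singleton_self _), rfl⟩⟩

end Compactness

theorem LocTracesVia.exists_of_elementarilyEquivalent {L₁ L₂ : Lang} {N₀ M₀ M : Type}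
    [L₁.Structure N₀] [L₂.Structure M₀] [L₂.Structure M] [Nonempty N₀] [Nonempty M₀]
    {κ : Cardinal} (h : LocTracesVia L₁ N₀ L₂ M₀ κ) (hM : M ≅[L₂] M₀) :
    ∃ (N : Type) (_ : L₁.Structure N), (N ≅[L₁] N₀) ∧ LocTracesVia L₁ N L₂ M κ := by
  obtain ⟨E₀, hE₀κ, hE₀⟩ := h
  choose P c₀ h₀ using fun p : FinFormula L₂ => hE₀.exists_presents p.2
  obtain ⟨N, _, hN, f, c, hf⟩ := TracePattern.exists_presents_of_elementarilyEquivalent hM h₀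
  exact ⟨N, _, hN, range f, mk_range_le.trans hE₀κ,
    localWitness_range_of_presents fun m φ => ⟨P ⟨m, φ⟩, c ⟨m, φ⟩, hf ⟨m, φ⟩⟩⟩

/-- (1) If `N` locally trace defines `M` then this can be witnessed by a collection of at most
`|Th(M)| = |L₂| + ℵ₀` functions `M → N`.
(2) If some model of `T` is locally trace definable in a model of `T*` via `κ` functions, then
every model of `T` is locally trace definable in some model of `T*` via `κ` functions.
(3) Local trace definability via `κ` and via `η` functions compose to local trace definability
via `κ * η` functions. -/
theorem statement0 :
    -- (1)
    (∀ (L₁ L₂ : Lang) (N M : Type) (S₁ : L₁.Structure N) (S₂ : L₂.Structure M),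
      Infinite N → Infinite M →
      @LocTraces L₁ N S₁ L₂ M S₂ →
      ∃ E : Set (M → N), #E ≤ L₂.card + ℵ₀ ∧ @LocalWitness L₁ N S₁ L₂ M S₂ E) ∧
    -- (2)
    (∀ (L₁ L₂ : Lang) (T : L₁.Theory) (T' : L₂.Theory) (κ : Cardinal.{0}),
      T.IsComplete → T'.IsComplete →
      (∃ (M : Type) (SM : L₁.Structure M) (N : Type) (SN : L₂.Structure N),
        Infinite M ∧ Infinite N ∧ @Theory.Model L₁ M SM T ∧ @Theory.Model L₂ N SN T' ∧
          @LocTracesVia L₂ N SN L₁ M SM κ) →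
      ∀ (M : Type) (SM : L₁.Structure M), Infinite M → @Theory.Model L₁ M SM T →
        ∃ (N : Type) (SN : L₂.Structure N), Infinite N ∧ @Theory.Model L₂ N SN T' ∧
          @LocTracesVia L₂ N SN L₁ M SM κ) ∧
    -- (3)
    (∀ (L₁ L₂ L₃ : Lang) (M₁ M₂ M₃ : Type)
        (S₁ : L₁.Structure M₁) (S₂ : L₂.Structure M₂) (S₃ : L₃.Structure M₃)
        (κ η : Cardinal.{0}),
      Infinite M₁ → Infinite M₂ → Infinite M₃ →
      @LocTracesVia L₂ M₂ S₂ L₁ M₁ S₁ κ → @LocTracesVia L₃ M₃ S₃ L₂ M₂ S₂ η →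
      @LocTracesVia L₃ M₃ S₃ L₁ M₁ S₁ (κ * η)) := by
  refine ⟨?_, ?_, ?_⟩
  · rintro L₁ L₂ N M S₁ S₂ - - ⟨E, hE⟩
    exact hE.exists_card_le
  · rintro L₁ L₂ T T' κ hT - ⟨M₀, SM₀, N₀, SN₀, hM₀, hN₀, hM₀T, hN₀T', hN₀M₀⟩ M SM hM hMT
    obtain ⟨N, SN, hNN₀, hNM⟩ :=
      hN₀M₀.exists_of_elementarilyEquivalent (hT.models_elementarily_equivalent M M₀)
    exact ⟨N, SN, hNN₀.symm.infinite, hNN₀.symm.theory_model, hNM⟩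
  · rintro L₁ L₂ L₃ M₁ M₂ M₃ S₁ S₂ S₃ κ η - - - h₁₂ h₂₃
    exact h₁₂.trans h₂₃

end TracePaper
end

section
/- Let T be a theory in a language L and κ an infinite cardinal. The class of two-sorted structures (P, 𝔐, Π) such that 𝔐 ⊨ T, Π is a family of κ functions P → M, and for all a_1,…,a_n ∈ M, all distinct π_1,…,π_n ∈ Π, and all m ≥ 1 there exist at least m distinct elements p of P with π_i(p) = a_i for i = 1,…,n, is elementary and its theory is complete; consequently this theory equals D^κ(T), i.e. every such structure is elementarily equivalent to (M^κ, 𝔐, (π_i)_{i<κ}) for any 𝔐 ⊨ T. -/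
open FirstOrder Language Set Cardinal

namespace TracePaper

/-!
Both the genericity axioms and `𝔐 ⊨ T` are first-order in the two-sorted language: the former
directly, the latter after relativizing `L`-sentences to the second sort, with function symbols
read through their graphs. Both hold in `(M₀^ι, 𝔐₀, π)`, which gives one direction.

Conversely, in a generic structure every sentence is equivalent to an `L`-sentence about `𝔐`
alone, uniformly in the structure, so completeness of `T` transfers truth from `(M₀^ι, 𝔐₀, π)`.
The `L`-sentence is found by induction on formulas. A tuple of elements of `P ⊕ M` is described
by which of its entries are equal elements of `P`, together with the values in `M` of its
second-sort entries and of the finitely many projections of its first-sort entries that the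
formula mentions. A quantifier over `P ⊕ M` then splits into a quantifier over `M`, a choice
among the first-sort entries already present, and a quantifier over the projections of a new
element of `P`; genericity provides such an element for any prescribed projections.
-/

section CodedStructure

open Structure

variable {L : Lang} {ι P M : Type} [L.Structure M]

instance : (funRelLang L).IsRelational := fun _ => inferInstanceAs (IsEmpty Empty)
instance : (relLang L).IsRelational := fun _ => inferInstanceAs (IsEmpty Empty)
instance : (projLang ι).IsRelational := fun _ => inferInstanceAs (IsEmpty Empty)
instance : (DLang L ι).IsRelational := inferInstanceAs ((funRelLang L).sum _).IsRelational

def boundVar {L' : Language} [L'.IsRelational] {n : ℕ} : L'.Term (Empty ⊕ Fin n) → Fin n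
  | Term.var b => b.elim isEmptyElim id
  | Term.func f _ => isEmptyElim f

lemma realize_eq_boundVar {L' : Language} [L'.IsRelational] {N : Type*} [L'.Structure N]
    {n : ℕ} (t : L'.Term (Empty ⊕ Fin n)) (v : Empty → N) (xs : Fin n → N) :
    t.realize (Sum.elim v xs) = xs (boundVar t) := by
  rcases t with (e | b) | ⟨f, _⟩
  · exact e.elim
  · rfl
  · exact isEmptyElim f

def funRel {m : ℕ} (g : L.Functions m) : (DLang L ι).Relations (m + 1) := Sum.inl g
def relRel {m : ℕ} (r : L.Relations m) : (DLang L ι).Relations m := Sum.inr (Sum.inl r)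
def sortRel : (DLang L ι).Relations 1 := Sum.inr (Sum.inr ())
def projRel (i : ι) : (DLang L ι).Relations 2 := Sum.inr (Sum.inr i)

variable (π : ι → P → M)

lemma relMap_funRel {m : ℕ} (g : L.Functions m) (y : Fin (m + 1) → P ⊕ M) :
    letI := dStructure L ι P M π
    RelMap (funRel (ι := ι) g) y ↔ ∃ a : Fin m → M, (∀ i, y i.castSucc = Sum.inr (a i)) ∧
      y (Fin.last m) = Sum.inr (funMap g a) := Iff.rfl

lemma relMap_relRel {m : ℕ} (r : L.Relations m) (y : Fin m → P ⊕ M) :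
    letI := dStructure L ι P M π
    RelMap (relRel (ι := ι) r) y ↔ ∃ a : Fin m → M, (∀ i, y i = Sum.inr (a i)) ∧ RelMap r a :=
  Iff.rfl

lemma relMap_sortRel (y : Fin 1 → P ⊕ M) :
    letI := dStructure L ι P M π
    RelMap (sortRel (L := L) (ι := ι)) y ↔ ∃ p, y 0 = Sum.inl p := Iff.rfl

lemma relMap_projRel (i : ι) (y : Fin 2 → P ⊕ M) :
    letI := dStructure L ι P M π
    RelMap (projRel (L := L) i) y ↔ ∃ p, y 0 = Sum.inl p ∧ y 1 = Sum.inr (π i p) := Iff.rfl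

end CodedStructure

section Genericity

open Structure

variable {L : Lang} {ι P M : Type}

lemma exists_finset_le_card_iff {Q : P → Prop} {m : ℕ} :
    (∃ S : Finset P, m ≤ S.card ∧ ∀ p ∈ S, Q p) ↔
      ∃ p : Fin m → P, Function.Injective p ∧ ∀ j, Q (p j) := by
  classical
  constructor
  · rintro ⟨S, hm, hS⟩
    let e : Fin m ↪ S := (Fin.castLEEmb hm).trans S.equivFin.symm.toEmbedding
    exact ⟨fun j => e j, Subtype.val_injective.comp e.injective, fun j => hS _ (e j).2⟩
  · rintro ⟨p, hp, hQ⟩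
    refine ⟨Finset.univ.image p, ?_, ?_⟩
    · rw [Finset.card_image_of_injective _ hp, Finset.card_univ, Fintype.card_fin]
    · simpa using hQ

lemma generic_iff_exists_injective (π : ι → P → M) :
    Generic π ↔ ∀ (n : ℕ) (idx : Fin n → ι), Function.Injective idx →
      ∀ (a : Fin n → M) (m : ℕ),
        ∃ p : Fin m → P, Function.Injective p ∧ ∀ j k, π (idx k) (p j) = a k := by
  simp only [Generic, exists_finset_le_card_iff]

lemma Generic.exists_fresh {π : ι → P → M} (hπ : Generic π) (I : Finset ι) (a : I → M)
    {F : Set P} (hF : F.Finite) : ∃ p ∉ F, ∀ i : I, π i p = a i := by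
  obtain ⟨S, hS, hSa⟩ := hπ I.card (fun k => I.equivFin.symm k)
    (Subtype.val_injective.comp I.equivFin.symm.injective) (a ∘ I.equivFin.symm)
    (hF.toFinset.card + 1)
  obtain ⟨p, hpS, hpF⟩ := Finset.exists_mem_notMem_of_card_lt_card (Nat.lt_of_succ_le hS)
  exact ⟨p, by simpa using hpF, fun i => by simpa using hSa p hpS (I.equivFin i)⟩

lemma Generic.nonempty [Nonempty ι] {π : ι → P → M} (hπ : Generic π) : Nonempty M := by
  obtain ⟨p, -, -⟩ := hπ.exists_fresh ∅ (fun i => (Finset.notMem_empty _ i.2).elim)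
    Set.finite_empty
  exact ⟨π (Classical.arbitrary ι) p⟩

lemma generic_proj [Infinite ι] [Infinite M] : Generic (fun (i : ι) (x : ι → M) => x i) := by
  classical
  rw [generic_iff_exists_injective]
  intro n idx hidx a m
  obtain ⟨i₀, hi₀⟩ := (Set.finite_range idx).infinite_compl.nonempty
  let base : ι → M := Function.extend idx a fun _ => Classical.arbitrary M
  let c : Fin m ↪ M := Fin.valEmbedding.trans (Infinite.natEmbedding M)
  refine ⟨fun j => Function.update base i₀ (c j), fun j j' h => c.injective ?_, fun j k => ?_⟩
  · simpa using congrFun h i₀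
  · have hk : idx k ≠ i₀ := fun h => hi₀ ⟨k, h⟩
    simp [Function.update_of_ne hk, base, hidx.extend_apply]

open BoundedFormula in
/-- For every tuple `x` of second-sort elements there are `m` distinct first-sort elements
whose `idx k`-th projection is `x k`. -/
noncomputable def genericSentence {n : ℕ} (idx : Fin n → ι) (m : ℕ) : (DLang L ι).Sentence :=
  Formula.iAlls (Fin n) <|
    (Formula.iInf fun k => (sortRel.formula₁ (var (Sum.inr k))).not).imp <|
      Formula.iExs (Fin m) <|
        (Formula.iInf fun j => sortRel.formula₁ (var (Sum.inr j))) ⊓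
        (Formula.iInf fun q : Fin m × Fin n =>
          (projRel (idx q.2)).formula₂ (var (Sum.inr q.1)) (var (Sum.inl (Sum.inr q.2)))) ⊓
        (Formula.iInf fun q : {q : Fin m × Fin m // q.1 ≠ q.2} =>
          ((var (Sum.inr q.1.1)).equal (var (Sum.inr q.1.2))).not)

variable [L.Structure M] (π : ι → P → M)

lemma realize_genericSentence {n : ℕ} (idx : Fin n → ι) (m : ℕ) :
    letI := dStructure L ι P M π
    (P ⊕ M) ⊨ genericSentence (L := L) idx m ↔
      ∀ a : Fin n → M, ∃ p : Fin m → P, Function.Injective p ∧ ∀ j k, π (idx k) (p j) = a k := by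
  simp only [Sentence.Realize, genericSentence, ne_eq, Formula.realize_iAlls,
    Formula.realize_imp, Formula.realize_iInf, Formula.realize_not, Formula.realize_rel₁,
    Term.realize_var, Sum.elim_inr, relMap_sortRel, Fin.isValue, Matrix.cons_val_fin_one,
    not_exists, Formula.realize_iExs, Formula.realize_inf, Formula.realize_rel₂, Sum.elim_inl,
    relMap_projRel, Matrix.cons_val_zero, Matrix.cons_val_one, Prod.forall,
    Formula.realize_equal, Subtype.forall]
  constructor
  · intro h a
    obtain ⟨y, ⟨hyP, hyπ⟩, hyinj⟩ := h (Sum.inr ∘ a) (by simp)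
    choose p hp using hyP
    refine ⟨p, fun j j' hjj' => by_contra fun hne => hyinj j j' hne (by rw [hp, hp, hjj']),
      fun j k => ?_⟩
    obtain ⟨q, hq, hqa⟩ := hyπ j k
    rw [hp j, Sum.inl.injEq] at hq
    simpa [hq] using hqa.symm
  · intro h x hx
    have hxM : ∀ k, ∃ c, x k = Sum.inr c := fun k => by
      rcases hxk : x k with q | c
      exacts [(hx k q hxk).elim, ⟨c, rfl⟩]
    choose a ha using hxM
    obtain ⟨p, hp, hpa⟩ := h a
    exact ⟨Sum.inl ∘ p, ⟨fun j => ⟨_, rfl⟩, fun j k => ⟨p j, rfl, by rw [ha, hpa]⟩⟩,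
      fun j j' hne h => hne (hp (Sum.inl.inj h))⟩

lemma generic_iff_forall_realize_genericSentence :
    letI := dStructure L ι P M π
    Generic π ↔ ∀ (n : ℕ) (idx : Fin n → ι), Function.Injective idx → ∀ m : ℕ,
      (P ⊕ M) ⊨ genericSentence (L := L) idx m := by
  simp only [generic_iff_exists_injective, realize_genericSentence]
  exact forall₃_congr fun _ _ _ => forall_comm

end Genericity

section Relativization

open Structure

variable {L : Lang} (ι : Type)

/-- The formula saying that the extra variable is the value of `t`, computed in the second sort
through the graphs of the function symbols. -/
noncomputable def termGraph {β : Type} : L.Term β → (DLang L ι).Formula (β ⊕ Unit)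
  | Term.var x => (Term.var (Sum.inl x)).equal (Term.var (Sum.inr ()))
  | Term.func f ts => Formula.iExs (Fin _) <|
      (Formula.iInf fun i =>
        (termGraph (ts i)).relabel (Sum.elim (Sum.inl ∘ Sum.inl) fun _ => Sum.inr i)) ⊓
      (funRel f).formula (Fin.lastCases (Term.var (Sum.inl (Sum.inr ()))) (Term.var ∘ Sum.inr))

noncomputable def equalGraph {β : Type} (t₁ t₂ : L.Term β) : (DLang L ι).Formula β :=
  Formula.iExs Unit (termGraph ι t₁ ⊓ termGraph ι t₂)

noncomputable def relGraph {β : Type} {l : ℕ} (R : L.Relations l) (ts : Fin l → L.Term β) :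
    (DLang L ι).Formula β :=
  Formula.iExs (Fin l) <|
    (Formula.iInf fun i => (termGraph ι (ts i)).relabel (Sum.elim Sum.inl fun _ => Sum.inr i)) ⊓
    (relRel R).formula (Term.var ∘ Sum.inr)

noncomputable def relativize {α : Type} :
    ∀ {n : ℕ}, L.BoundedFormula α n → (DLang L ι).Formula (α ⊕ Fin n)
  | _, .falsum => ⊥
  | _, .equal t₁ t₂ => equalGraph ι t₁ t₂
  | _, .rel R ts => relGraph ι R ts
  | _, .imp φ ψ => (relativize φ).imp (relativize ψ)
  | _, .all φ => Formula.iAlls Unit <|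
      sortRel.formula₁ (Term.var (Sum.inr ())) ⊔
      (relativize φ).relabel
        (Sum.elim (Sum.inl ∘ Sum.inl) (Fin.lastCases (Sum.inr ()) (Sum.inl ∘ Sum.inr)))

noncomputable def relativizeSentence (φ : L.Sentence) : (DLang L ι).Sentence :=
  (relativize ι φ).relabel (Sum.elim id finZeroElim)

variable {ι} {P M : Type} [L.Structure M] (π : ι → P → M)

omit [L.Structure M] in
lemma exists_inr_args_iff {l : ℕ} {c : Fin l → M} {Q : (Fin l → M) → Prop} :
    (∃ w : Fin l → P ⊕ M, (∀ j, w j = Sum.inr (c j)) ∧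
      ∃ a : Fin l → M, (∀ j, w j = Sum.inr (a j)) ∧ Q a) ↔ Q c := by
  constructor
  · rintro ⟨w, hw, a, ha, hQ⟩
    rwa [show c = a from funext fun j => Sum.inr.inj ((hw j).symm.trans (ha j))]
  · exact fun hQ => ⟨_, fun _ => rfl, c, fun _ => rfl, hQ⟩

lemma realize_termGraph {β : Type} (t : L.Term β) {u : β ⊕ Unit → P ⊕ M} {v : β → M}
    (hv : ∀ x, u (Sum.inl x) = Sum.inr (v x)) :
    letI := dStructure L ι P M π
    (termGraph ι t).Realize u ↔ u (Sum.inr ()) = Sum.inr (t.realize v) := by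
  induction t generalizing u with
  | var x => simp [termGraph, hv, eq_comm]
  | func f ts ih =>
    simp only [termGraph, Formula.realize_iExs, Formula.realize_inf, Formula.realize_iInf,
      Formula.realize_relabel, Formula.realize_rel, relMap_funRel]
    simp [ih, hv, exists_inr_args_iff]

lemma realize_equalGraph {β : Type} (t₁ t₂ : L.Term β) (v : β → M) :
    letI := dStructure L ι P M π
    (equalGraph ι t₁ t₂).Realize (fun b => (Sum.inr (v b) : P ⊕ M)) ↔
      t₁.realize v = t₂.realize v := by
  have h (t : L.Term β) (w : Unit → P ⊕ M) :=
    realize_termGraph π t (u := Sum.elim (fun b => Sum.inr (v b)) w) fun _ => rfl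
  simp only [equalGraph, Formula.realize_iExs, Formula.realize_inf, h, Sum.elim_inr]
  constructor
  · rintro ⟨w, h₁, h₂⟩
    exact Sum.inr.inj (h₁.symm.trans h₂)
  · intro h
    exact ⟨fun _ => Sum.inr (t₁.realize v), rfl, congrArg Sum.inr h⟩

lemma realize_relGraph {β : Type} {l : ℕ} (R : L.Relations l) (ts : Fin l → L.Term β)
    (v : β → M) :
    letI := dStructure L ι P M π
    (relGraph ι R ts).Realize (fun b => (Sum.inr (v b) : P ⊕ M)) ↔
      RelMap R fun i => (ts i).realize v := by
  have h (t : L.Term β) (w : Fin l → P ⊕ M) (i : Fin l) := realize_termGraph π t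
    (u := Sum.elim (fun b => Sum.inr (v b)) w ∘ Sum.elim Sum.inl fun _ => Sum.inr i) fun _ => rfl
  simp only [relGraph, Formula.realize_iExs, Formula.realize_inf, Formula.realize_iInf,
    Formula.realize_relabel, Formula.realize_rel, relMap_relRel, h]
  simp [exists_inr_args_iff]

lemma realize_relativize {α : Type} {n : ℕ} (φ : L.BoundedFormula α n) (v : α → M)
    (xs : Fin n → M) :
    letI := dStructure L ι P M π
    (relativize ι φ).Realize (fun a => (Sum.inr (Sum.elim v xs a) : P ⊕ M)) ↔
      φ.Realize v xs := by
  induction φ with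
  | falsum => simp [relativize, BoundedFormula.Realize]
  | equal t₁ t₂ => exact realize_equalGraph π t₁ t₂ _
  | rel R ts => exact realize_relGraph π R ts _
  | imp φ ψ ihφ ihψ => simp [relativize, ihφ, ihψ]
  | all φ ih =>
    have hsnoc (w : Unit → P ⊕ M) (m : M) (hw : w () = Sum.inr m) :
        (fun a => Sum.elim (fun a => Sum.inr (Sum.elim v xs a)) w a) ∘
          Sum.elim (Sum.inl ∘ Sum.inl) (Fin.lastCases (Sum.inr ()) (Sum.inl ∘ Sum.inr)) =
        fun a => (Sum.inr (Sum.elim v (Fin.snoc xs m) a) : P ⊕ M) := by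
      funext a
      rcases a with a | j
      · rfl
      · refine Fin.lastCases ?_ (fun j => ?_) j <;> simp [hw]
    simp only [relativize, Formula.realize_iAlls, Formula.realize_sup, Formula.realize_rel₁,
      relMap_sortRel, Formula.realize_relabel, BoundedFormula.realize_all]
    constructor
    · intro h m
      rw [← ih, ← hsnoc (fun _ => Sum.inr m) m rfl]
      exact (h _).resolve_left (by simp)
    · intro h w
      rcases hw : w () with p | m
      · exact Or.inl ⟨p, by simp [hw]⟩
      · rw [hsnoc w m hw, ih]
        exact Or.inr (h m)

lemma realize_relativizeSentence (φ : L.Sentence) :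
    letI := dStructure L ι P M π
    (P ⊕ M) ⊨ relativizeSentence ι φ ↔ M ⊨ φ := by
  let := dStructure L ι P M π
  have hv : (default ∘ Sum.elim id finZeroElim : Empty ⊕ Fin 0 → P ⊕ M) =
      fun a => Sum.inr (Sum.elim default default a) := Subsingleton.elim _ _
  rw [Sentence.Realize, relativizeSentence, Formula.realize_relabel, hv, realize_relativize]
  rfl

end Relativization

section Elimination

open Structure Function

variable {L : Lang} {ι P M : Type} {I : Finset ι} {n : ℕ}

def SameInl (xs : Fin n → P ⊕ M) (b b' : Fin n) : Prop :=
  ∃ p, xs b = Sum.inl p ∧ xs b' = Sum.inl p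

@[simp] lemma sameInl_self {xs : Fin n → P ⊕ M} {b : Fin n} :
    SameInl xs b b ↔ ∃ p, xs b = Sum.inl p := by
  simp [SameInl]

/-- The pattern of `Fin.snoc xs a` when `a` differs from every entry of `xs` of the first sort;
`c` says whether `a` itself is of the first sort. -/
def snocFresh (E : Fin n → Fin n → Prop) (c : Prop) : Fin (n + 1) → Fin (n + 1) → Prop :=
  Fin.lastCases (Fin.lastCases c fun _ => False) fun b => Fin.lastCases False (E b)

lemma sameInl_snoc_inr (xs : Fin n → P ⊕ M) (m : M) :
    SameInl (Fin.snoc xs (Sum.inr m)) = snocFresh (SameInl xs) False := by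
  funext x y
  induction x using Fin.lastCases <;> induction y using Fin.lastCases <;>
    simp [SameInl, snocFresh]

lemma sameInl_snoc_inl {xs : Fin n → P ⊕ M} {p : P} (hp : ∀ b, xs b ≠ Sum.inl p) :
    SameInl (Fin.snoc xs (Sum.inl p)) = snocFresh (SameInl xs) True := by
  funext x y
  induction x using Fin.lastCases <;> induction y using Fin.lastCases <;>
    simp [SameInl, snocFresh, hp]

lemma sameInl_comp (xs : Fin n → P ⊕ M) {k : ℕ} (f : Fin k → Fin n) :
    SameInl (xs ∘ f) = (SameInl xs on f) := rfl

lemma snoc_self_eq_comp {α : Type} (xs : Fin n → α) (b : Fin n) :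
    Fin.snoc xs (xs b) = xs ∘ (Fin.snoc id b : Fin (n + 1) → Fin n) := by
  rw [Fin.comp_snoc, Function.comp_id]

variable (I) in
/-- `g` records `a`: its value at `none` if `a` is of the second sort, and its projections along
`I` at `some i` if `a` is of the first sort. -/
def Records (π : ι → P → M) : P ⊕ M → (Option I → M) → Prop
  | Sum.inl p, g => ∀ i : I, g (some i) = π i p
  | Sum.inr m, g => g none = m

variable (I) in
def Encodes (π : ι → P → M) (xs : Fin n → P ⊕ M) (d : Fin n × Option I → M) : Prop :=
  ∀ b, Records I π (xs b) fun o => d (b, o)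

def splitLastSlot : Fin (n + 1) × Option I → (Fin n × Option I) ⊕ Option I
  | (x, o) => Fin.lastCases (Sum.inr o) (fun b => Sum.inl (b, o)) x

section Encodes

variable {π : ι → P → M} {xs : Fin n → P ⊕ M} {d : Fin n × Option I → M}

lemma Encodes.eq_inr (hd : Encodes I π xs d) {b : Fin n} (hb : ¬SameInl xs b b) :
    xs b = Sum.inr (d (b, none)) := by
  have hdb := hd b
  rcases hxb : xs b with p | m
  · simp [hxb] at hb
  · rw [hxb] at hdb
    rw [show d (b, none) = m from hdb]

lemma Encodes.eq_proj (hd : Encodes I π xs d) {b : Fin n} {p : P} (hp : xs b = Sum.inl p)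
    (i : I) : d (b, some i) = π i p := by
  have hdb := hd b
  rw [hp] at hdb
  exact hdb i

lemma Encodes.snoc (hd : Encodes I π xs d) {a : P ⊕ M} {g : Option I → M}
    (ha : Records I π a g) : Encodes I π (Fin.snoc xs a) (Sum.elim d g ∘ splitLastSlot) := by
  intro x
  induction x using Fin.lastCases <;> simp [splitLastSlot, ha, hd _]

lemma Encodes.comp (hd : Encodes I π xs d) {k : ℕ} (f : Fin k → Fin n) :
    Encodes I π (xs ∘ f) (d ∘ Prod.map f id) :=
  fun x => hd (f x)

end Encodes

def relSupport : ∀ {l : ℕ}, (DLang L ι).Relations l → Set ι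
  | 2, Sum.inr (Sum.inr i) => {i}
  | _, _ => ∅

def projSupport {α : Type} : ∀ {n : ℕ}, (DLang L ι).BoundedFormula α n → Set ι
  | _, .falsum => ∅
  | _, .equal _ _ => ∅
  | _, .rel R _ => relSupport R
  | _, .imp φ ψ => projSupport φ ∪ projSupport ψ
  | _, .all φ => projSupport φ

lemma projSupport_finite {α : Type} {n : ℕ} (φ : (DLang L ι).BoundedFormula α n) :
    (projSupport φ).Finite := by
  induction φ with
  | falsum | equal => exact Set.finite_empty
  | rel R _ =>
    unfold projSupport relSupport
    split
    exacts [Set.finite_singleton _, Set.finite_empty]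
  | imp _ _ ih₁ ih₂ => exact ih₁.union ih₂
  | all _ ih => exact ih

open scoped Classical in
noncomputable def elimEq (E : Fin n → Fin n → Prop) (b₁ b₂ : Fin n) :
    L.Formula (Fin n × Option I) :=
  if E b₁ b₁ ∨ E b₂ b₂ then (if E b₁ b₂ then ⊤ else ⊥)
  else (Term.var (b₁, none)).equal (Term.var (b₂, none))

variable (I) in
open scoped Classical in
noncomputable def elimRel (E : Fin n → Fin n → Prop) :
    ∀ {l : ℕ}, (DLang L ι).Relations l → (Fin l → Fin n) → L.Formula (Fin n × Option I)
  | 0, Sum.inl g, _ => Empty.elim g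
  | _ + 1, Sum.inl g, v =>
    if ∀ j, ¬E (v j) (v j) then
      (Term.func g fun j => Term.var (v j.castSucc, none)).equal (Term.var (v (Fin.last _), none))
    else ⊥
  | _, Sum.inr (Sum.inl r), v =>
    if ∀ j, ¬E (v j) (v j) then Relations.formula (L := L) r fun j => Term.var (v j, none) else ⊥
  | 1, Sum.inr (Sum.inr _), v => if E (v 0) (v 0) then ⊤ else ⊥
  | 2, Sum.inr (Sum.inr i), v =>
    if h : i ∈ I ∧ E (v 0) (v 0) ∧ ¬E (v 1) (v 1) then
      (Term.var (v 0, some ⟨i, h.1⟩)).equal (Term.var (v 1, none))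
    else ⊥
  | 0, Sum.inr (Sum.inr r), _ => Empty.elim r
  | _ + 3, Sum.inr (Sum.inr r), _ => Empty.elim r

variable (I) in
/-- An `L`-formula equivalent to `φ` in generic structures, at tuples whose entries of the first
sort coincide according to `E` (so `E b b` says that entry `b` is of the first sort). The variable
`(b, none)` stands for the value of a second-sort entry `b`, and `(b, some i)` for the `i`-th
projection of a first-sort entry `b`. -/
noncomputable def elimFormula : ∀ {n : ℕ}, (DLang L ι).BoundedFormula Empty n →
    (Fin n → Fin n → Prop) → L.Formula (Fin n × Option I)
  | _, .falsum, _ => ⊥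
  | _, .equal t₁ t₂, E => elimEq E (boundVar t₁) (boundVar t₂)
  | _, .rel R ts, E => elimRel I E R (boundVar ∘ ts)
  | _, .imp φ ψ, E => (elimFormula φ E).imp (elimFormula ψ E)
  -- the new entry is of the second sort, a new element of the first sort, or a copy of entry `b`
  | n, .all φ, E =>
    Formula.iAlls (Option I)
      ((elimFormula φ (snocFresh E False) ⊓ elimFormula φ (snocFresh E True)).relabel
        splitLastSlot) ⊓
    Formula.iInf fun b : Fin n =>
      (elimFormula φ (E on Fin.snoc id b)).relabel
        (Prod.map (Fin.snoc id b : Fin (n + 1) → Fin n) id)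

noncomputable def elimSentence (χ : (DLang L ι).Sentence) : L.Sentence :=
  (elimFormula (projSupport_finite χ).toFinset χ fun _ _ => False).relabel fun x => x.1.elim0

variable [L.Structure M] (π : ι → P → M) {xs : Fin n → P ⊕ M} {d : Fin n × Option I → M}

lemma realize_elimEq (hd : Encodes I π xs d) (b₁ b₂ : Fin n) :
    xs b₁ = xs b₂ ↔ (elimEq (L := L) (SameInl xs) b₁ b₂).Realize d := by
  have h₁ := hd b₁
  have h₂ := hd b₂
  unfold elimEq SameInl
  rcases hx₁ : xs b₁ with p₁ | m₁ <;> rcases hx₂ : xs b₂ with p₂ | m₂ <;>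
    simp only [hx₁, hx₂, Records] at h₁ h₂ <;> split_ifs <;> simp_all [eq_comm]

lemma realize_elimRel_funRel (hd : Encodes I π xs d) {l : ℕ} (g : L.Functions l)
    (v : Fin (l + 1) → Fin n) :
    letI := dStructure L ι P M π
    RelMap (funRel (ι := ι) g) (xs ∘ v) ↔ (elimRel I (SameInl xs) (funRel g) v).Realize d := by
  refine (relMap_funRel π g _).trans ?_
  simp only [elimRel, funRel]
  split_ifs with hall
  · simp [hd.eq_inr (hall _), ← funext_iff, eq_comm]
  · push Not at hall
    obtain ⟨j, hj⟩ := hall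
    obtain ⟨p, hp⟩ := sameInl_self.1 hj
    simp only [Formula.realize_bot, iff_false, not_exists, not_and]
    intro a ha hlast
    induction j using Fin.lastCases with
    | last => simp [hp] at hlast
    | cast j => simpa [hp] using ha j

lemma realize_elimRel_relRel (hd : Encodes I π xs d) {l : ℕ} (r : (relLang L).Relations l)
    (v : Fin l → Fin n) :
    letI := dStructure L ι P M π
    RelMap (L := DLang L ι) (Sum.inr (Sum.inl r)) (xs ∘ v) ↔
      (elimRel I (SameInl xs) (Sum.inr (Sum.inl r)) v).Realize d := by
  refine (relMap_relRel (L := L) π r _).trans ?_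
  simp only [elimRel]
  split_ifs with hall
  · simp [hd.eq_inr (hall _), ← funext_iff]
    rfl
  · push Not at hall
    obtain ⟨j, hj⟩ := hall
    obtain ⟨p, hp⟩ := sameInl_self.1 hj
    simp only [Formula.realize_bot, iff_false, not_exists, not_and]
    intro a ha
    simpa [hp] using ha j

lemma realize_elimRel_projLang (hd : Encodes I π xs d) {l : ℕ} (t : (projLang ι).Relations l)
    (ht : relSupport (L := L) (Sum.inr (Sum.inr t)) ⊆ I) (v : Fin l → Fin n) :
    letI := dStructure L ι P M π
    RelMap (L := DLang L ι) (Sum.inr (Sum.inr t)) (xs ∘ v) ↔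
      (elimRel (L := L) I (SameInl xs) (Sum.inr (Sum.inr t)) v).Realize d := by
  rcases l with _ | _ | _ | l
  · exact Empty.elim t
  · refine (relMap_sortRel π _).trans ?_
    simp only [elimRel]
    split_ifs with h
    · simpa using h
    · simpa using h
  · refine (relMap_projRel π t _).trans ?_
    simp only [elimRel]
    split_ifs with h
    · obtain ⟨p, hp⟩ := sameInl_self.1 h.2.1
      simp [hp, hd.eq_inr h.2.2, hd.eq_proj hp, eq_comm]
    · simp only [Formula.realize_bot, iff_false, not_exists, not_and]
      intro p h₀ h₁
      exact h ⟨ht (Set.mem_singleton _), sameInl_self.2 ⟨p, h₀⟩, by simp_all⟩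
  · exact Empty.elim t

lemma realize_elimRel (hd : Encodes I π xs d) {l : ℕ} (R : (DLang L ι).Relations l)
    (hR : relSupport R ⊆ I) (v : Fin l → Fin n) :
    letI := dStructure L ι P M π
    RelMap R (xs ∘ v) ↔ (elimRel I (SameInl xs) R v).Realize d := by
  rcases R with g | r | t
  · cases l with
    | zero => exact Empty.elim g
    | succ l => exact realize_elimRel_funRel π hd g v
  · exact realize_elimRel_relRel π hd r v
  · exact realize_elimRel_projLang π hd t hR v

lemma realize_all_iff_elimFormula [Nonempty M] (hπ : Generic π)
    {φ : (DLang L ι).BoundedFormula Empty (n + 1)}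
    (ih : ∀ {xs : Fin (n + 1) → P ⊕ M} {d : Fin (n + 1) × Option I → M}, Encodes I π xs d →
      ((letI := dStructure L ι P M π; φ.Realize default xs) ↔
        (elimFormula I φ (SameInl xs)).Realize d))
    (hd : Encodes I π xs d) :
    letI := dStructure L ι P M π
    φ.all.Realize default xs ↔ (elimFormula I φ.all (SameInl xs)).Realize d := by
  let := dStructure L ι P M π
  have hnew {a : P ⊕ M} {g : Option I → M} (ha : Records I π a g) := ih (hd.snoc ha)
  have hdup (b : Fin n) : φ.Realize default (Fin.snoc xs (xs b)) ↔
      (elimFormula I φ (SameInl xs on Fin.snoc id b)).Realize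
        (d ∘ Prod.map (Fin.snoc id b) id) := by
    rw [← sameInl_comp, snoc_self_eq_comp]
    exact ih (hd.comp _)
  simp only [elimFormula, BoundedFormula.realize_all, Formula.realize_inf,
    Formula.realize_iAlls, Formula.realize_relabel, Formula.realize_iInf]
  constructor
  · intro h
    refine ⟨fun g => ⟨?_, ?_⟩, fun b => (hdup b).1 (h _)⟩
    · rw [← sameInl_snoc_inr xs (g none)]
      exact (hnew (a := Sum.inr (g none)) rfl).1 (h _)
    · obtain ⟨p, hp, hpg⟩ := hπ.exists_fresh I (fun i => g (some i))
        ((Set.finite_range xs).preimage Sum.inl_injective.injOn)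
      rw [← sameInl_snoc_inl (p := p) fun b hb => hp ⟨b, hb⟩]
      exact (hnew (a := Sum.inl p) fun i => (hpg i).symm).1 (h _)
  · rintro ⟨hg, hb⟩ a
    by_cases ha : ∃ b, xs b = a
    · obtain ⟨b, rfl⟩ := ha
      exact (hdup b).2 (hb b)
    · push Not at ha
      rcases a with p | m
      · refine (hnew (a := Sum.inl p)
          (g := fun o => o.elim (Classical.arbitrary M) fun i => π i p) fun i => rfl).2 ?_
        rw [sameInl_snoc_inl ha]
        exact (hg _).2
      · refine (hnew (a := Sum.inr m) (g := fun _ => m) rfl).2 ?_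
        rw [sameInl_snoc_inr]
        exact (hg _).1

theorem realize_elimFormula [Nonempty M] (hπ : Generic π)
    (φ : (DLang L ι).BoundedFormula Empty n) (hφ : projSupport φ ⊆ I) (hd : Encodes I π xs d) :
    letI := dStructure L ι P M π
    φ.Realize default xs ↔ (elimFormula I φ (SameInl xs)).Realize d := by
  induction φ with
  | falsum => simp [elimFormula, BoundedFormula.Realize]
  | equal t₁ t₂ =>
    simp only [BoundedFormula.Realize, realize_eq_boundVar]
    exact realize_elimEq π hd _ _
  | rel R ts =>
    simp only [BoundedFormula.Realize, realize_eq_boundVar]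
    exact realize_elimRel π hd R hφ _
  | imp φ ψ ihφ ihψ =>
    simp only [projSupport, Set.union_subset_iff] at hφ
    simp [elimFormula, ihφ hφ.1 hd, ihψ hφ.2 hd]
  | all φ ih => exact realize_all_iff_elimFormula π hπ (ih hφ) hd

lemma realize_elimSentence [Nonempty M] (hπ : Generic π) (χ : (DLang L ι).Sentence) :
    letI := dStructure L ι P M π
    (P ⊕ M) ⊨ χ ↔ M ⊨ elimSentence χ := by
  let := dStructure L ι P M π
  have hpat : SameInl (default : Fin 0 → P ⊕ M) = fun _ _ => False := Subsingleton.elim _ _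
  rw [Sentence.Realize, Formula.Realize, realize_elimFormula π hπ χ
    (projSupport_finite χ).coe_toFinset.superset (d := fun x => x.1.elim0) fun b => b.elim0,
    hpat, elimSentence, Sentence.Realize, Formula.realize_relabel]
  exact iff_of_eq (congrArg _ (Subsingleton.elim _ _))

end Elimination

/-- Let `T` be a complete theory in `L` and `κ = #ι` an infinite cardinal.
A two-sorted structure `(P, 𝔐, (π_i)_{i : ι})` (coded as the one-sorted structure
`dStructure L ι P M π` on `P ⊕ M`) is a model of `D^κ(T)` — the complete theory of the
canonical structure `(M₀^ι, 𝔐₀, (π_i))` over any model `𝔐₀ ⊨ T` — if and only if `𝔐 ⊨ T`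
and the genericity axioms hold.  In particular the class of such structures is the class of
models of the complete theory `D^κ(T)`, and every such structure is elementarily equivalent
to `(M₀^ι, 𝔐₀, (π_i))`. -/
theorem statement1 (L : Lang) (T : L.Theory) (hT : T.IsComplete)
    (ι : Type) (hι : Infinite ι)
    (M₀ : Type) (S₀ : L.Structure M₀) (hM₀inf : Infinite M₀)
    (hM₀ : @Theory.Model L M₀ S₀ T)
    (P M : Type) (SM : L.Structure M) (π : ι → P → M) :
    @Theory.Model (DLang L ι) (P ⊕ M) (@dStructure L ι P M SM π) (@DTheory L ι M₀ S₀)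
      ↔ (@Theory.Model L M SM T ∧ Generic π) := by
  let := dStructure L ι P M π
  let := canonD L ι M₀
  have hcanon : Generic (fun (i : ι) (x : ι → M₀) => x i) := generic_proj
  constructor
  · intro h
    have transfer (χ : (DLang L ι).Sentence) (hχ : ((ι → M₀) ⊕ M₀) ⊨ χ) : (P ⊕ M) ⊨ χ :=
      h.realize_of_mem χ hχ
    refine ⟨⟨fun φ hφ => ?_⟩, ?_⟩
    · exact (realize_relativizeSentence (L := L) π φ).1
        (transfer _ ((realize_relativizeSentence _ φ).2 (hM₀.realize_of_mem φ hφ)))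
    · rw [generic_iff_forall_realize_genericSentence (L := L)]
      exact fun n idx hidx m => transfer _
        ((generic_iff_forall_realize_genericSentence (L := L) _).1 hcanon n idx hidx m)
  · rintro ⟨hMT, hπ⟩
    have := hπ.nonempty
    refine ⟨fun χ hχ => ?_⟩
    rw [realize_elimSentence π hπ, hT.realize_sentence_iff _ M,
      ← hT.realize_sentence_iff _ M₀, ← realize_elimSentence _ hcanon]
    exact hχ

end TracePaper
end

section
/- Let T be a theory and κ an infinite cardinal. If 𝔐 ⊨ T, P is a set, and (f_i)_{i<κ} is a collection of functions P → M, then there is a set Q extending P and a collection (g_i)_{i<κ} of functions Q → M such that each g_i extends f_i and (Q, 𝔐, (g_i)_{i<κ}) is a model of D^κ(T). -/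
open FirstOrder Language Set Cardinal

namespace TracePaper

section Statement2Proof

variable {L : Lang} {ι : Type}

/-- The projection indices used by a relation symbol of `DLang L ι`. -/
def projOf {n : ℕ} : (DLang L ι).Relations n → Set ι :=
  match n with
  | 2 => fun R => Sum.elim (fun _ => ∅) (Sum.elim (fun _ => ∅) (fun i => {i})) R
  | _ => fun _ => ∅

lemma projOf_finite {n : ℕ} (R : (DLang L ι).Relations n) : (projOf R).Finite := by
  match n with
  | 0 => exact Set.finite_empty
  | 1 => exact Set.finite_empty
  | 2 =>
    rcases R with r | r | i
    · exact Set.finite_empty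
    · exact Set.finite_empty
    · exact Set.finite_singleton _
  | (m+3) => exact Set.finite_empty

/-- The projection indices used by a bounded formula of `DLang L ι`. -/
def usedProj : ∀ {n : ℕ}, (DLang L ι).BoundedFormula Empty n → Set ι
  | _, .falsum => ∅
  | _, .equal _ _ => ∅
  | _, .rel R _ => projOf R
  | _, .imp φ ψ => usedProj φ ∪ usedProj ψ
  | _, .all φ => usedProj φ

lemma usedProj_finite : ∀ {n : ℕ} (φ : (DLang L ι).BoundedFormula Empty n),
    (usedProj φ).Finite
  | _, .falsum => Set.finite_empty
  | _, .equal _ _ => Set.finite_empty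
  | _, .rel R _ => projOf_finite R
  | _, .imp φ ψ => (usedProj_finite φ).union (usedProj_finite ψ)
  | _, .all φ => usedProj_finite φ

/-- every term of `DLang L ι` is a variable. -/
lemma term_eq_var {β : Type} : ∀ t : (DLang L ι).Term β, ∃ j, t = Term.var j
  | .var j => ⟨j, rfl⟩
  | .func f _ => by rcases f with f | f | f <;> exact f.elim

variable {M Q : Type} [SM : L.Structure M]

/-- Matching of elements between `Q ⊕ M` and `(ι → M) ⊕ M` relative to
a finite set `s` of indices. -/
def MatchEl (g : ι → Q → M) (s : Set ι) (a : Q ⊕ M) (b : (ι → M) ⊕ M) : Prop :=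
  (∃ m, a = Sum.inr m ∧ b = Sum.inr m) ∨
    (∃ q x, a = Sum.inl q ∧ b = Sum.inl x ∧ ∀ i ∈ s, x i = g i q)

lemma matchEl_inr {g : ι → Q → M} {s : Set ι} {a b} (h : MatchEl g s a b) (m : M) :
    a = Sum.inr m ↔ b = Sum.inr m := by
  rcases h with ⟨m', rfl, rfl⟩ | ⟨q, x, rfl, rfl, -⟩ <;> simp

lemma matchEl_inl {g : ι → Q → M} {s : Set ι} {a b} (h : MatchEl g s a b) :
    (∃ p, a = Sum.inl p) ↔ ∃ x, b = Sum.inl x := by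
  rcases h with ⟨m', rfl, rfl⟩ | ⟨q, x, rfl, rfl, -⟩ <;> simp

lemma relMap_transfer (g : ι → Q → M) (s : Set ι) {n : ℕ}
    (R : (DLang L ι).Relations n) (hR : projOf R ⊆ s)
    (x : Fin n → Q ⊕ M) (y : Fin n → (ι → M) ⊕ M)
    (h : ∀ j, MatchEl g s (x j) (y j)) :
    (dStructure L ι Q M g).RelMap R x ↔ (canonD L ι M).RelMap R y := by
  rcases R with f | r | t
  · show funRelInterp L Q M f x ↔ funRelInterp L (ι → M) M f y
    cases n with
    | zero => exact f.elim
    | succ m =>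
      show (∃ a : Fin m → M, _ ∧ _) ↔ (∃ a : Fin m → M, _ ∧ _)
      constructor
      · rintro ⟨a, h1, h2⟩
        exact ⟨a, fun i => (matchEl_inr (h _) _).mp (h1 i),
          (matchEl_inr (h _) _).mp h2⟩
      · rintro ⟨a, h1, h2⟩
        exact ⟨a, fun i => (matchEl_inr (h _) _).mpr (h1 i),
          (matchEl_inr (h _) _).mpr h2⟩
  · show (∃ a : Fin n → M, (∀ i, x i = Sum.inr (a i)) ∧ _) ↔
      (∃ a : Fin n → M, (∀ i, y i = Sum.inr (a i)) ∧ _)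
    constructor
    · rintro ⟨a, h1, h2⟩
      exact ⟨a, fun i => (matchEl_inr (h _) _).mp (h1 i), h2⟩
    · rintro ⟨a, h1, h2⟩
      exact ⟨a, fun i => (matchEl_inr (h _) _).mpr (h1 i), h2⟩
  · show projInterp g t x ↔ projInterp (fun i (z : ι → M) => z i) t y
    match n, t with
    | 0, t => exact t.elim
    | 1, t =>
      show (∃ p, x 0 = Sum.inl p) ↔ ∃ p, y 0 = Sum.inl p
      exact matchEl_inl (h 0)
    | 2, i =>
      have his : i ∈ s := hR (Set.mem_singleton i)
      show (∃ p, x 0 = Sum.inl p ∧ x 1 = Sum.inr (g i p)) ↔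
        ∃ z, y 0 = Sum.inl z ∧ y 1 = Sum.inr (z i)
      constructor
      · rintro ⟨p, h0, h1⟩
        rcases h 0 with ⟨m', hm, -⟩ | ⟨q, z, hq, hz, hzs⟩
        · rw [h0] at hm; exact absurd hm (by simp)
        · rw [h0] at hq
          obtain rfl : p = q := by injection hq
          refine ⟨z, hz, ?_⟩
          rw [hzs i his]
          exact (matchEl_inr (h 1) _).mp h1
      · rintro ⟨z, h0, h1⟩
        rcases h 0 with ⟨m', -, hm⟩ | ⟨q, z', hq, hz, hzs⟩
        · rw [h0] at hm; exact absurd hm (by simp)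
        · rw [h0] at hz
          obtain rfl : z = z' := by injection hz
          refine ⟨q, hq, ?_⟩
          rw [← hzs i his]
          exact (matchEl_inr (h 1) _).mpr h1
    | (m+3), t => exact t.elim

/-- Compatible valuations. -/
def Compat (g : ι → Q → M) (s : Set ι) {n : ℕ}
    (v : Fin n → Q ⊕ M) (w : Fin n → (ι → M) ⊕ M) : Prop :=
  (∀ k, MatchEl g s (v k) (w k)) ∧ ∀ k k', v k = v k' ↔ w k = w k'

lemma compat_snoc {g : ι → Q → M} {s : Set ι} {n : ℕ}
    {v : Fin n → Q ⊕ M} {w : Fin n → (ι → M) ⊕ M} (hc : Compat g s v w)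
    {a b} (hab : MatchEl g s a b) (heq : ∀ k, a = v k ↔ b = w k) :
    Compat g s (Fin.snoc v a) (Fin.snoc w b) := by
  constructor
  · intro k
    refine Fin.lastCases ?_ ?_ k
    · simpa using hab
    · intro k'; simpa using hc.1 k'
  · intro k k'
    refine Fin.lastCases ?_ ?_ k
    · refine Fin.lastCases ?_ ?_ k'
      · simp
      · intro j; simpa using heq j
    · intro j
      refine Fin.lastCases ?_ ?_ k'
      · simpa [eq_comm] using heq j
      · intro j'; simpa using hc.2 j j'

lemma extend_fwd (hι : Infinite ι) (hM : Infinite M) (g : ι → Q → M)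
    {s : Set ι} (hs : s.Finite) {n : ℕ}
    {v : Fin n → Q ⊕ M} {w : Fin n → (ι → M) ⊕ M} (hc : Compat g s v w)
    (a : Q ⊕ M) : ∃ b, Compat g s (Fin.snoc v a) (Fin.snoc w b) := by
  classical
  haveI := hι; haveI := hM
  rcases a with q | m
  · by_cases hex : ∃ k, v k = Sum.inl q
    · obtain ⟨k0, hk0⟩ := hex
      refine ⟨w k0, compat_snoc hc ?_ ?_⟩
      · rw [← hk0]; exact hc.1 k0
      · intro k; rw [← hk0]; exact hc.2 k0 k
    · -- fresh point on the left: pick a fresh function on the right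
      obtain ⟨i₀, hi₀⟩ := hs.infinite_compl.nonempty
      have hWfin : {x : ι → M | ∃ k, w k = Sum.inl x}.Finite := by
        have : {x : ι → M | ∃ k, w k = Sum.inl x} ⊆ Sum.inl ⁻¹' (Set.range w) := by
          rintro x ⟨k, hk⟩; exact ⟨k, hk⟩
        exact ((Set.finite_range w).preimage Sum.inl_injective.injOn).subset this
      have hTfin : ((fun x : ι → M => x i₀) '' {x | ∃ k, w k = Sum.inl x}).Finite :=
        hWfin.image _
      obtain ⟨m₀, hm₀⟩ := hTfin.infinite_compl.nonempty
      set x : ι → M := fun i => if i ∈ s then g i q else m₀ with hxdef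
      refine ⟨Sum.inl x, compat_snoc hc ?_ ?_⟩
      · exact Or.inr ⟨q, x, rfl, rfl, fun i hi => if_pos hi⟩
      · intro k
        constructor
        · intro h; exact absurd h.symm (fun hh => hex ⟨k, hh⟩)
        · intro h
          exfalso
          have hx : x ∈ {x : ι → M | ∃ k, w k = Sum.inl x} := ⟨k, h.symm⟩
          refine hm₀ ⟨x, hx, ?_⟩
          show x i₀ = m₀
          exact if_neg hi₀
  · refine ⟨Sum.inr m, compat_snoc hc (Or.inl ⟨m, rfl, rfl⟩) ?_⟩
    intro k
    rw [eq_comm, matchEl_inr (hc.1 k) m, eq_comm]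

lemma extend_bwd (g : ι → Q → M)
    (HQ : ∀ x : ι → M, {q : Q | ∀ i, g i q = x i}.Infinite) {s : Set ι} {n : ℕ}
    {v : Fin n → Q ⊕ M} {w : Fin n → (ι → M) ⊕ M} (hc : Compat g s v w)
    (b : (ι → M) ⊕ M) : ∃ a, Compat g s (Fin.snoc v a) (Fin.snoc w b) := by
  classical
  rcases b with x | m
  · by_cases hex : ∃ k, w k = Sum.inl x
    · obtain ⟨k0, hk0⟩ := hex
      refine ⟨v k0, compat_snoc hc ?_ ?_⟩
      · rw [← hk0]; exact hc.1 k0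
      · intro k; rw [← hk0]; exact hc.2 k0 k
    · have hvfin : (Sum.inl ⁻¹' (Set.range v) : Set Q).Finite :=
        (Set.finite_range v).preimage Sum.inl_injective.injOn
      obtain ⟨q, hq⟩ := ((HQ x).diff hvfin).nonempty
      refine ⟨Sum.inl q, compat_snoc hc ?_ ?_⟩
      · exact Or.inr ⟨q, x, rfl, rfl, fun i _ => (hq.1 i).symm⟩
      · intro k
        constructor
        · intro h; exact absurd (⟨k, h.symm⟩ : Sum.inl q ∈ Set.range v) hq.2
        · intro h; exact absurd h.symm (fun hh => hex ⟨k, hh⟩)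
  · refine ⟨Sum.inr m, compat_snoc hc (Or.inl ⟨m, rfl, rfl⟩) ?_⟩
    intro k
    rw [eq_comm, matchEl_inr (hc.1 k) m, eq_comm]

lemma main_transfer (hι : Infinite ι) (hM : Infinite M) (g : ι → Q → M)
    (HQ : ∀ x : ι → M, {q : Q | ∀ i, g i q = x i}.Infinite) :
    ∀ {n : ℕ} (φ : (DLang L ι).BoundedFormula Empty n) (s : Set ι), s.Finite →
      usedProj φ ⊆ s → ∀ (v : Fin n → Q ⊕ M) (w : Fin n → (ι → M) ⊕ M),
      Compat g s v w → ∀ (xsA : Empty → Q ⊕ M) (xsB : Empty → (ι → M) ⊕ M),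
      (@BoundedFormula.Realize (DLang L ι) (Q ⊕ M) (dStructure L ι Q M g) Empty n φ xsA v ↔
        @BoundedFormula.Realize (DLang L ι) ((ι → M) ⊕ M) (canonD L ι M) Empty n φ xsB w) := by
  intro n φ
  letI := dStructure L ι Q M g
  letI := canonD L ι M
  induction φ with
  | falsum => intro s hs hsub v w hc xsA xsB; exact Iff.rfl
  | equal t₁ t₂ =>
    intro s hs hsub v w hc xsA xsB
    obtain ⟨j₁, rfl⟩ := term_eq_var t₁
    obtain ⟨j₂, rfl⟩ := term_eq_var t₂
    show Term.realize _ _ = Term.realize _ _ ↔ Term.realize _ _ = Term.realize _ _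
    rcases j₁ with e | k₁; · exact e.elim
    rcases j₂ with e | k₂; · exact e.elim
    simp only [Term.realize_var, Sum.elim_inr]
    exact hc.2 k₁ k₂
  | rel R ts =>
    intro s hs hsub v w hc xsA xsB
    show Structure.RelMap R _ ↔ Structure.RelMap R _
    refine relMap_transfer g s R hsub _ _ ?_
    intro j
    obtain ⟨jv, hjv⟩ := term_eq_var (ts j)
    rcases jv with e | k
    · exact e.elim
    · simp only [hjv, Term.realize_var, Sum.elim_inr]
      exact hc.1 k
  | imp φ ψ ihφ ihψ =>
    intro s hs hsub v w hc xsA xsB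
    have h1 := ihφ s hs (fun i hi => hsub (Or.inl hi)) v w hc xsA xsB
    have h2 := ihψ s hs (fun i hi => hsub (Or.inr hi)) v w hc xsA xsB
    show (_ → _) ↔ (_ → _)
    rw [h1, h2]
  | all φ ih =>
    intro s hs hsub v w hc xsA xsB
    show (∀ a, _) ↔ (∀ b, _)
    constructor
    · intro h b
      obtain ⟨a, hca⟩ := extend_bwd g HQ hc b
      exact (ih s hs hsub _ _ hca xsA xsB).mp (h a)
    · intro h a
      obtain ⟨b, hcb⟩ := extend_fwd hι hM g hs hc a
      exact (ih s hs hsub _ _ hcb xsA xsB).mpr (h b)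

end Statement2Proof


/-- Let `T = Th(𝔐)` (any complete theory with a model `𝔐`) and `κ = #ι`
infinite.  If `P` is a set and `(f_i)_{i : ι}` is a collection of functions `P → M`, then
there is a set `Q` extending `P` (via an injection `e : P ↪ Q`) and functions
`(g_i)_{i : ι} : Q → M` with each `g_i` extending `f_i`, such that `(Q, 𝔐, (g_i))` is a
model of `D^κ(T)`. -/
theorem statement2 (L : Lang) (ι : Type) (hι : Infinite ι)
    (M : Type) (SM : L.Structure M) (hM : Infinite M)
    (P : Type) (f : ι → P → M) :
    ∃ (Q : Type) (e : P ↪ Q) (g : ι → Q → M),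
      (∀ (i : ι) (p : P), g i (e p) = f i p) ∧
      @Theory.Model (DLang L ι) (Q ⊕ M) (@dStructure L ι Q M SM g) (@DTheory L ι M SM) := by
  classical
  refine ⟨P ⊕ ((ι → M) × ℕ), ⟨Sum.inl, Sum.inl_injective⟩,
    fun i => Sum.elim (f i) (fun z => z.1 i), fun i p => rfl, ?_⟩
  letI SA : (DLang L ι).Structure ((P ⊕ ((ι → M) × ℕ)) ⊕ M) :=
    dStructure L ι (P ⊕ ((ι → M) × ℕ)) M (fun i => Sum.elim (f i) (fun z => z.1 i))
  letI SB : (DLang L ι).Structure ((ι → M) ⊕ M) := canonD L ι M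
  rw [Theory.model_iff]
  intro φ hφ
  have hφ' : ((ι → M) ⊕ M) ⊨ φ :=
    (@mem_completeTheory (DLang L ι) ((ι → M) ⊕ M) (canonD L ι M) φ).mp hφ
  have HQ : ∀ x : ι → M,
      {q : P ⊕ ((ι → M) × ℕ) | ∀ i, Sum.elim (f i) (fun z : (ι → M) × ℕ => z.1 i) q = x i}.Infinite := by
    intro x
    apply Set.infinite_of_injective_forall_mem
      (f := fun n : ℕ => (Sum.inr (x, n) : P ⊕ ((ι → M) × ℕ)))
    · intro a b h
      simpa using h
    · intro n i
      rfl
  have key := main_transfer hι hM (fun i => Sum.elim (f i) (fun z : (ι → M) × ℕ => z.1 i)) HQ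
    φ (usedProj φ) (usedProj_finite φ) subset_rfl
    (default : Fin 0 → (P ⊕ ((ι → M) × ℕ)) ⊕ M) (default : Fin 0 → (ι → M) ⊕ M)
    ⟨fun k => k.elim0, fun k => k.elim0⟩
    (default : Empty → (P ⊕ ((ι → M) × ℕ)) ⊕ M) (default : Empty → (ι → M) ⊕ M)
  exact key.mpr hφ'

end TracePaper
end

section
/- Let 𝔽 be a field, V an 𝔽-vector space, and 𝔙 an expansion of V by predicates for a family of 𝔽-linear subspaces of the various powers V^n. Then every 𝔙-definable subset of V^n is a boolean combination of affine subspaces of V^n (cosets of 𝔽-linear subspaces). If moreover 𝔽 has characteristic zero, then every 𝔙-definable subgroup of any V^n is an 𝔽-linear subspace. -/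
open FirstOrder Language Set Cardinal

namespace TracePaper

section Vec

/-- The language of `F`-vector spaces: a constant `0`, a unary function symbol for scalar
multiplication by each element of `F`, and a binary addition. -/
def vecLang (F : Type) : Lang where
  Functions := fun n => match n with
    | 0 => Unit
    | 1 => F
    | 2 => Unit
    | _ => Empty
  Relations := fun _ => Empty

/-- The natural `vecLang F`-structure on an `F`-vector space `V`. -/
def vecStructure (F V : Type) [Field F] [AddCommGroup V] [Module F V] :
    (vecLang F).Structure V where
  funMap := fun {n} g x => match n, g, x with
    | 0, _, _ => 0
    | 1, c, x => (show F from c) • x 0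
    | 2, _, x => x 0 + x 1
    | (_+3), g, _ => Empty.elim g
  RelMap := fun r _ => Empty.elim r

end Vec
/-- Boolean combinations of sets from a family `G`. -/
inductive BoolComb {α : Type} (G : Set (Set α)) : Set α → Prop
  | basic {s : Set α} : s ∈ G → BoolComb G s
  | univ : BoolComb G Set.univ
  | compl {s : Set α} : BoolComb G s → BoolComb G sᶜ
  | inter {s t : Set α} : BoolComb G s → BoolComb G t → BoolComb G (s ∩ t)

/-- The language with an `n`-ary relation symbol for each member of `ι n`. -/
def famLang (ι : ℕ → Type) : Lang where
  Functions := fun _ => Empty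
  Relations := ι

/-- The structure interpreting each relation symbol of `famLang ι` by the corresponding
distinguished subspace of `V^n`. -/
def famStructure {F V : Type} [Field F] [AddCommGroup V] [Module F V]
    (ι : ℕ → Type) (W : ∀ n, ι n → Submodule F (Fin n → V)) : (famLang ι).Structure V where
  funMap := fun g _ => Empty.elim g
  RelMap := fun {n} r x => x ∈ W n r

end TracePaper

/-!
Definable sets are handled by induction on formulas. Terms are affine in their variables, so atomic
formulas define preimages of cosets under affine maps, and the boolean connectives are free; the
real work is the quantifier step, i.e. closure of boolean combinations of cosets under linear
images. Such a combination is a finite union of cells `C \ (D₁ ∪ ⋯ ∪ Dₖ)`. A point `y` of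
`p '' C` misses `p '' (C \ ⋃ Dᵢ)` iff the fibre of `C` over `y`, a coset of `U₀ = U ⊓ ker p`, is
covered by its traces on the `Dᵢ`, which are cosets of subgroups of `U₀`. By B. H. Neumann's lemma
only the traces whose subgroup has finite index in `U₀` matter, so covering can be checked at
finitely many points `σ y + r` for an affine section `σ` of `p` over `p '' C`, and each such test
is an affine preimage of a `Dᵢ`.

In characteristic zero, a definable subgroup `H` meets every line `F ∙ x`, `x ∈ H`, in a boolean
combination of points and the whole line. That trace is a subgroup of `F` containing `ℕ`, hence
infinite and so cofinite, and a cofinite subgroup of an infinite group is everything.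
-/

open Pointwise

namespace Subgroup

variable {G ι : Type*} [Group G] [Finite ι]

@[to_additive]
theorem exists_finiteIndex_mem_of_iUnion_eq_univ {H : ι → Subgroup G} {t : ι → Set G}
    (ht : ∀ i, ∀ a ∈ t i, t i = a • (H i : Set G)) (hcover : ⋃ i, t i = Set.univ) (a : G) :
    ∃ i, (H i).FiniteIndex ∧ a ∈ t i := by
  classical
  have := Fintype.ofFinite ι
  let g (i : ι) : G := if h : (t i).Nonempty then h.some else 1
  have hg {i : ι} (hi : (t i).Nonempty) : t i = g i • (H i : Set G) := by
    simpa [g, hi] using ht i _ hi.some_mem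
  have hcover' : ⋃ i ∈ Finset.univ.filter (fun i => (t i).Nonempty), g i • (H i : Set G) =
      Set.univ := by
    rw [← hcover]
    ext b
    simp only [Set.mem_iUnion, Finset.mem_filter, Finset.mem_univ, true_and, exists_prop]
    exact ⟨fun ⟨i, hi, hb⟩ => ⟨i, hg hi ▸ hb⟩, fun ⟨i, hb⟩ => ⟨i, ⟨b, hb⟩, hg ⟨b, hb⟩ ▸ hb⟩⟩
  have ha : a ∈ ⋃ i ∈ _, g i • (H i : Set G) :=
    (leftCoset_cover_filter_FiniteIndex hcover').symm ▸ Set.mem_univ a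
  simp only [Set.mem_iUnion, Finset.mem_filter, Finset.mem_univ, true_and, exists_prop] at ha
  obtain ⟨i, ⟨hne, hfi⟩, hai⟩ := ha
  exact ⟨i, hfi, (hg hne).symm ▸ hai⟩

/-- `R` is a system of representatives for the intersection of the finite-index `H i`. -/
@[to_additive]
theorem exists_finite_iUnion_eq_univ_iff (H : ι → Subgroup G) :
    ∃ R : Set G, R.Finite ∧ ∀ t : ι → Set G, (∀ i, ∀ a ∈ t i, t i = a • (H i : Set G)) →
      (⋃ i, t i = Set.univ ↔ ∀ r ∈ R, ∃ i, (H i).FiniteIndex ∧ r ∈ t i) := by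
  classical
  have := Fintype.ofFinite ι
  let N := ⨅ i ∈ Finset.univ.filter (fun i => (H i).FiniteIndex), H i
  have : N.FiniteIndex := finiteIndex_iInf' _ fun i hi => (Finset.mem_filter.1 hi).2
  have : Finite (G ⧸ N) := finite_quotient_of_finiteIndex
  refine ⟨Set.range (Quotient.out : G ⧸ N → G), Set.finite_range _, fun t ht => ⟨?_, fun hR => ?_⟩⟩
  · rintro hcover _ ⟨q, rfl⟩
    exact exists_finiteIndex_mem_of_iUnion_eq_univ ht hcover _
  · refine Set.eq_univ_of_forall fun a => Set.mem_iUnion.2 ?_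
    obtain ⟨i, hfi, hr⟩ := hR _ ⟨(a : G ⧸ N), rfl⟩
    obtain ⟨n, hn⟩ := QuotientGroup.mk_out_eq_mul N a
    have hnH : n.1 ∈ H i := (iInf₂_le i (by simpa using hfi) : N ≤ H i) n.2
    refine ⟨i, ?_⟩
    rw [ht i _ hr, mem_leftCoset_iff, hn, mul_inv_rev, inv_mul_cancel_right]
    exact (H i).inv_mem hnH

@[to_additive]
theorem eq_top_of_finite_compl [Infinite G] (H : Subgroup G) (hH : (H : Set G)ᶜ.Finite) :
    H = ⊤ := by
  refine eq_top_iff.2 fun c _ => ?_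
  by_contra hc
  have hsub : c • (H : Set G) ⊆ (H : Set G)ᶜ := by
    rintro _ ⟨h, hh, rfl⟩ hch
    exact hc (by simpa using H.mul_mem hch (H.inv_mem hh))
  have hfin := (hH.subset hsub).of_finite_image (MulAction.injective c).injOn
  exact Set.infinite_univ (by simpa using hfin.union hH)

end Subgroup

namespace TracePaper

namespace BoolComb

variable {α : Type} {G : Set (Set α)}

theorem empty : BoolComb G (∅ : Set α) := by
  simpa using (univ : BoolComb G _).compl

theorem union {s t : Set α} (hs : BoolComb G s) (ht : BoolComb G t) : BoolComb G (s ∪ t) := by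
  simpa [Set.compl_inter] using (hs.compl.inter ht.compl).compl

theorem diff {s t : Set α} (hs : BoolComb G s) (ht : BoolComb G t) : BoolComb G (s \ t) :=
  hs.inter ht.compl

theorem biUnion {ι : Type} {s : Set ι} (hs : s.Finite) {f : ι → Set α}
    (hf : ∀ i ∈ s, BoolComb G (f i)) : BoolComb G (⋃ i ∈ s, f i) := by
  induction s, hs using Set.Finite.induction_on with
  | empty => simpa using empty
  | @insert i s _ _ ih =>
    rw [Set.biUnion_insert]
    exact (hf i (s.mem_insert i)).union (ih fun j hj => hf j (Set.mem_insert_of_mem i hj))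

theorem biInter {ι : Type} {s : Set ι} (hs : s.Finite) {f : ι → Set α}
    (hf : ∀ i ∈ s, BoolComb G (f i)) : BoolComb G (⋂ i ∈ s, f i) := by
  simpa [Set.compl_iUnion] using (biUnion hs fun i hi => (hf i hi).compl).compl

theorem sUnion {𝒞 : Set (Set α)} (h𝒞 : 𝒞.Finite) (hG : ∀ c ∈ 𝒞, BoolComb G c) :
    BoolComb G (⋃₀ 𝒞) := by
  simpa [Set.sUnion_eq_biUnion] using biUnion h𝒞 hG

theorem finite_or_finite_compl
    (hG : ∀ g ∈ G, g.Finite ∨ gᶜ.Finite) {S : Set α} (hS : BoolComb G S) :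
    S.Finite ∨ Sᶜ.Finite := by
  induction hS with
  | basic hg => exact hG _ hg
  | univ => simp
  | compl _ ih => simpa [or_comm] using ih
  | inter _ _ ih ih' =>
    rw [Set.compl_inter]
    rcases ih with h | h
    · exact .inl (h.inter_of_left _)
    rcases ih' with h' | h'
    · exact .inl (h'.inter_of_right _)
    · exact .inr (h.union h')

end BoolComb

section Cells

variable {α : Type} {G : Set (Set α)}

/-- No separate empty case is needed: `∅ = C \ C`. -/
def IsCell (G : Set (Set α)) (S : Set α) : Prop :=
  ∃ C ∈ G, ∃ (ι : Type) (_ : Finite ι) (D : ι → Set α), (∀ i, D i ∈ G) ∧ S = C \ ⋃ i, D i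

theorem IsCell.of_diff {C D : Set α} (hC : C ∈ G) (hD : D ∈ G) : IsCell G (C \ D) :=
  ⟨C, hC, Unit, inferInstance, fun _ => D, fun _ => hD, by rw [Set.iUnion_const]⟩

theorem IsCell.of_mem {C : Set α} (hC : C ∈ G) : IsCell G C :=
  ⟨C, hC, Empty, inferInstance, Empty.elim, fun i => i.elim, by simp⟩

theorem IsCell.inter (hG : ∀ s ∈ G, ∀ t ∈ G, s ∩ t ∈ G ∨ s ∩ t = ∅) {S T : Set α}
    (hS : IsCell G S) (hT : IsCell G T) : IsCell G (S ∩ T) := by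
  obtain ⟨C, hC, ι, _, D, hD, rfl⟩ := hS
  obtain ⟨C', hC', ι', _, D', hD', rfl⟩ := hT
  have hdistrib : (C \ ⋃ i, D i) ∩ (C' \ ⋃ i, D' i) = (C ∩ C') \ ⋃ i, Sum.elim D D' i := by
    rw [Set.iUnion_sum]
    ext x
    simp only [Set.mem_inter_iff, Set.mem_sdiff, Set.mem_union, Set.mem_iUnion, Sum.elim_inl,
      Sum.elim_inr]
    tauto
  rcases hG C hC C' hC' with h | h
  · exact hdistrib ▸ ⟨C ∩ C', h, ι ⊕ ι', inferInstance, Sum.elim D D', Sum.forall.2 ⟨hD, hD'⟩, rfl⟩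
  · rw [hdistrib, h, Set.empty_sdiff, ← Set.sdiff_self (s := C)]
    exact IsCell.of_diff hC hC

theorem BoolComb.exists_sUnion_cells (hG : ∀ s ∈ G, ∀ t ∈ G, s ∩ t ∈ G ∨ s ∩ t = ∅)
    (huniv : Set.univ ∈ G) {S : Set α} (hS : BoolComb G S) :
    ∃ 𝒞 : Set (Set α), 𝒞.Finite ∧ (∀ c ∈ 𝒞, IsCell G c) ∧ S = ⋃₀ 𝒞 := by
  let IsDNF (S : Set α) := ∃ 𝒞 : Set (Set α), 𝒞.Finite ∧ (∀ c ∈ 𝒞, IsCell G c) ∧ S = ⋃₀ 𝒞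
  have cell {c : Set α} (hc : IsCell G c) : IsDNF c := ⟨{c}, by simp, by simpa using hc, by simp⟩
  suffices IsDNF S ∧ IsDNF Sᶜ from this.1
  induction hS with
  | basic hs =>
    exact ⟨cell (.of_mem hs), by simpa [Set.compl_eq_univ_sdiff] using cell (.of_diff huniv hs)⟩
  | univ => exact ⟨cell (.of_mem huniv), ∅, by simp, by simp, by simp⟩
  | compl _ ih => simpa using ih.symm
  | inter _ _ ihs iht =>
    obtain ⟨⟨𝒞, h𝒞, hc, rfl⟩, ⟨𝒞c, h𝒞c, hcc, hsc⟩⟩ := ihs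
    obtain ⟨⟨𝒟, h𝒟, hd, rfl⟩, ⟨𝒟c, h𝒟c, hdc, htc⟩⟩ := iht
    refine ⟨⟨Set.image2 (· ∩ ·) 𝒞 𝒟, h𝒞.image2 _ h𝒟, ?_, ?_⟩,
      ⟨𝒞c ∪ 𝒟c, h𝒞c.union h𝒟c, ?_, by rw [Set.compl_inter, hsc, htc, Set.sUnion_union]⟩⟩
    · rintro _ ⟨c, hc𝒞, d, hd𝒟, rfl⟩
      exact (hc c hc𝒞).inter hG (hd d hd𝒟)
    · ext x
      simp only [Set.mem_inter_iff, Set.mem_sUnion, Set.mem_image2]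
      constructor
      · rintro ⟨⟨c, hc𝒞, hxc⟩, ⟨d, hd𝒟, hxd⟩⟩
        exact ⟨_, ⟨c, hc𝒞, d, hd𝒟, rfl⟩, hxc, hxd⟩
      · rintro ⟨_, ⟨c, hc𝒞, d, hd𝒟, rfl⟩, hxc, hxd⟩
        exact ⟨⟨c, hc𝒞, hxc⟩, ⟨d, hd𝒟, hxd⟩⟩
    · rintro c (hc | hc)
      exacts [hcc c hc, hdc c hc]

end Cells

def cosets (F W : Type) [Field F] [AddCommGroup W] [Module F W] : Set (Set W) :=
  {S | ∃ (U : Submodule F W) (v : W), S = {x | x - v ∈ U}}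

section Cosets

variable {F W W' : Type} [Field F] [AddCommGroup W] [Module F W] [AddCommGroup W'] [Module F W']

theorem coset_mem_cosets (U : Submodule F W) (v : W) : {x | x - v ∈ U} ∈ cosets F W :=
  ⟨U, v, rfl⟩

theorem submodule_mem_cosets (U : Submodule F W) : (U : Set W) ∈ cosets F W :=
  ⟨U, 0, by simp⟩

theorem coset_eq_of_mem {U : Submodule F W} {v a : W} (ha : a - v ∈ U) :
    {x | x - v ∈ U} = {x | x - a ∈ U} := by
  ext x
  have hsplit : x - v = (x - a) + (a - v) := by abel
  simp only [Set.mem_ofPred_eq, hsplit, U.add_mem_iff_left ha]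

theorem inter_mem_cosets_or_eq_empty {S T : Set W} (hS : S ∈ cosets F W) (hT : T ∈ cosets F W) :
    S ∩ T ∈ cosets F W ∨ S ∩ T = ∅ := by
  obtain ⟨U, v, rfl⟩ := hS
  obtain ⟨U', v', rfl⟩ := hT
  refine (Set.eq_empty_or_nonempty _).symm.imp (fun ⟨a, ha, ha'⟩ => ⟨U ⊓ U', a, ?_⟩) id
  rw [coset_eq_of_mem ha, coset_eq_of_mem ha']
  rfl

theorem preimage_coset_eq_empty_or (ℓ : W →ₗ[F] W') (c : W') (U : Submodule F W') (v : W') :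
    (fun x => ℓ x + c) ⁻¹' {y | y - v ∈ U} = ∅ ∨
      ∃ a, (fun x => ℓ x + c) ⁻¹' {y | y - v ∈ U} = {x | x - a ∈ U.comap ℓ} := by
  refine (Set.eq_empty_or_nonempty _).imp id fun ⟨a, ha⟩ => ⟨a, ?_⟩
  ext x
  have hsplit : ℓ x + c - v = ℓ (x - a) + (ℓ a + c - v) := by rw [map_sub]; abel
  simp only [Set.mem_preimage, Set.mem_ofPred_eq, Submodule.mem_comap, hsplit,
    U.add_mem_iff_left (show ℓ a + c - v ∈ U from ha)]

theorem BoolComb.preimage_affine (ℓ : W →ₗ[F] W') (c : W') {S : Set W'}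
    (hS : BoolComb (cosets F W') S) : BoolComb (cosets F W) ((fun x => ℓ x + c) ⁻¹' S) := by
  induction hS with
  | @basic S hS =>
    obtain ⟨U, v, rfl⟩ := hS
    rcases preimage_coset_eq_empty_or ℓ c U v with h | ⟨a, h⟩
    · exact h ▸ BoolComb.empty
    · exact h ▸ BoolComb.basic (coset_mem_cosets _ a)
  | univ => exact BoolComb.univ
  | compl _ ih => exact ih.compl
  | inter _ _ ih ih' => exact ih.inter ih'

theorem BoolComb.preimage_linear (ℓ : W →ₗ[F] W') {S : Set W'}
    (hS : BoolComb (cosets F W') S) : BoolComb (cosets F W) (ℓ ⁻¹' S) := by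
  simpa using hS.preimage_affine ℓ 0

theorem exists_linear_section (p : W →ₗ[F] W') (U : Submodule F W) :
    ∃ s : W' →ₗ[F] W, ∀ y ∈ U.map p, s y ∈ U ∧ p (s y) = y := by
  obtain ⟨r, hr⟩ := (p.submoduleMap U).exists_rightInverse_of_surjective
    (LinearMap.range_eq_top.2 (p.submoduleMap_surjective U))
  obtain ⟨s, hs⟩ := LinearMap.exists_extend (U.subtype ∘ₗ r)
  refine ⟨s, fun y hy => ?_⟩
  have hsy : s y = r ⟨y, hy⟩ := congr($hs ⟨y, hy⟩)
  refine ⟨hsy ▸ (r ⟨y, hy⟩).2, ?_⟩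
  rw [hsy]
  exact congr(Subtype.val ($hr ⟨y, hy⟩))

theorem mem_image_coset_diff_iff (p : W →ₗ[F] W') {U : Submodule F W} {v : W} {σ : W' → W}
    (hσ : ∀ y, y - p v ∈ U.map p → σ y - v ∈ U ∧ p (σ y) = y) (X : Set W) (y : W') :
    y ∈ p '' ({x | x - v ∈ U} \ X) ↔
      y - p v ∈ U.map p ∧ ∃ u ∈ U ⊓ LinearMap.ker p, σ y + u ∉ X := by
  constructor
  · rintro ⟨x, ⟨hx, hxX⟩, rfl⟩
    have hy : p x - p v ∈ U.map p := ⟨x - v, hx, map_sub p x v⟩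
    obtain ⟨hσU, hσp⟩ := hσ _ hy
    refine ⟨hy, x - σ (p x), ⟨?_, ?_⟩, by simpa using hxX⟩
    · simpa using U.sub_mem hx hσU
    · simp [hσp]
  · rintro ⟨hy, u, ⟨huU, huker⟩, huX⟩
    obtain ⟨hσU, hσp⟩ := hσ _ hy
    refine ⟨σ y + u, ⟨?_, huX⟩, by simp_all⟩
    simpa [add_sub_right_comm] using U.add_mem hσU huU

theorem setOf_add_sub_mem_eq_vadd {U₀ U : Submodule F W} {w v : W} {a : U₀}
    (ha : w + a - v ∈ U) :
    {u : U₀ | w + u - v ∈ U} = a +ᵥ ((U.comap U₀.subtype).toAddSubgroup : Set U₀) := by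
  ext u
  have hsplit : w + u - v = (w + a - v) + ↑(-a + u) := by push_cast; abel
  rw [mem_leftAddCoset_iff]
  simp only [Set.mem_ofPred_eq, SetLike.mem_coe, Submodule.mem_toAddSubgroup,
    Submodule.mem_comap, Submodule.subtype_apply, hsplit, U.add_mem_iff_right ha]

theorem IsCell.boolComb_image (p : W →ₗ[F] W') {S : Set W} (hS : IsCell (cosets F W) S) :
    BoolComb (cosets F W') (p '' S) := by
  obtain ⟨_, ⟨U, v, rfl⟩, ι, _, D, hD, rfl⟩ := hS
  choose UD vD hDeq using hD
  obtain rfl : D = fun i => {x | x - vD i ∈ UD i} := funext hDeq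
  obtain ⟨s, hs⟩ := exists_linear_section p U
  let σ (y : W') : W := s (y - p v) + v
  have hσ (y : W') (hy : y - p v ∈ U.map p) : σ y - v ∈ U ∧ p (σ y) = y := by
    obtain ⟨hsU, hsp⟩ := hs _ hy
    exact ⟨by simpa [σ] using hsU, by rw [map_add, hsp, sub_add_cancel]⟩
  let U₀ := U ⊓ LinearMap.ker p
  let H (i : ι) : AddSubgroup U₀ := ((UD i).comap U₀.subtype).toAddSubgroup
  obtain ⟨R, hRfin, hR⟩ := AddSubgroup.exists_finite_iUnion_eq_univ_iff H
  have key : p '' ({x | x - v ∈ U} \ ⋃ i, {x | x - vD i ∈ UD i}) = {y | y - p v ∈ U.map p} \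
      ⋂ r ∈ R, ⋃ i ∈ {i | (H i).FiniteIndex}, (fun y => σ y + r) ⁻¹' {x | x - vD i ∈ UD i} := by
    ext y
    have hcover := hR (fun i => {u : U₀ | σ y + u - vD i ∈ UD i})
      fun i _ ha => setOf_add_sub_mem_eq_vadd ha
    simp only [Set.eq_univ_iff_forall, Set.mem_iUnion, Set.mem_ofPred_eq] at hcover
    simp only [mem_image_coset_diff_iff p hσ, Set.mem_sdiff, Set.mem_ofPred_eq, Set.mem_iInter,
      Set.mem_iUnion, Set.mem_preimage, exists_prop]
    refine and_congr_right fun _ => ?_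
    rw [← not_iff_not]
    push Not
    exact Subtype.forall.symm.trans hcover
  rw [key]
  refine (BoolComb.basic (coset_mem_cosets _ _)).diff (BoolComb.biInter hRfin fun r _ =>
    BoolComb.biUnion (Set.toFinite {i | (H i).FiniteIndex}) fun i _ => ?_)
  have hσr : (fun y => σ y + r) = fun y => s y + (v - s (p v) + r) := by
    funext y
    simp only [σ, map_sub]
    abel
  rw [hσr]
  exact (BoolComb.basic (coset_mem_cosets _ _)).preimage_affine s _

theorem BoolComb.image_linear (p : W →ₗ[F] W') {S : Set W} (hS : BoolComb (cosets F W) S) :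
    BoolComb (cosets F W') (p '' S) := by
  obtain ⟨𝒞, h𝒞, hcells, rfl⟩ := hS.exists_sUnion_cells
    (fun _ hs _ ht => inter_mem_cosets_or_eq_empty hs ht) (by simpa using submodule_mem_cosets ⊤)
  rw [Set.image_sUnion]
  exact BoolComb.sUnion (h𝒞.image _)
    (Set.forall_mem_image.2 fun c hc => (hcells c hc).boolComb_image p)

theorem BoolComb.setOf_forall {T : Set (W × W')} (hT : BoolComb (cosets F (W × W')) T) :
    BoolComb (cosets F W) {x | ∀ a, (x, a) ∈ T} := by
  have hset : {x | ∀ a, (x, a) ∈ T} = (LinearMap.fst F W W' '' Tᶜ)ᶜ := by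
    ext x
    simp
  exact hset ▸ (hT.compl.image_linear _).compl

end Cosets

def snocLinearMap (F V α : Type) [Field F] [AddCommGroup V] [Module F V] (n : ℕ) :
    ((α → V) × (Fin n → V)) × V →ₗ[F] (α → V) × (Fin (n + 1) → V) where
  toFun x := (x.1.1, Fin.snoc x.1.2 x.2)
  map_add' x y := by
    ext j
    · rfl
    · refine Fin.lastCases ?_ (fun i => ?_) j <;> simp
  map_smul' c x := by
    ext j
    · rfl
    · refine Fin.lastCases ?_ (fun i => ?_) j <;> simp

section Definable

variable {F V : Type} [Field F] [AddCommGroup V] [Module F V]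

structure IsAffineStructure (F : Type) (L : Lang) (V : Type) [Field F] [AddCommGroup V]
    [Module F V] [L.Structure V] : Prop where
  funMap_affine {n : ℕ} (f : L.Functions n) :
    ∃ (ℓ : (Fin n → V) →ₗ[F] V) (c : V), ∀ x, Structure.funMap f x = ℓ x + c
  setOf_relMap_mem_cosets {n : ℕ} (r : L.Relations n) :
    {x | Structure.RelMap r x} ∈ cosets F (Fin n → V)

variable {L : Lang} [L.Structure V]

theorem IsAffineStructure.exists_realize_eq (h : IsAffineStructure F L V) {γ : Type}
    (t : L.Term γ) : ∃ (ℓ : (γ → V) →ₗ[F] V) (c : V), ∀ x, t.realize x = ℓ x + c := by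
  induction t with
  | var i => exact ⟨LinearMap.proj i, 0, fun x => by simp⟩
  | func f ts ih =>
    choose ℓ c hℓ using ih
    obtain ⟨ℓf, cf, hf⟩ := h.funMap_affine f
    refine ⟨ℓf ∘ₗ LinearMap.pi ℓ, ℓf c + cf, fun x => ?_⟩
    simp only [Term.realize_func, hf, hℓ, LinearMap.comp_apply]
    rw [← add_assoc, ← map_add]
    rfl

theorem IsAffineStructure.boolComb_setOf_realize (h : IsAffineStructure F L V) {α : Type}
    {k : ℕ} (φ : L.BoundedFormula α k) :
    BoolComb (cosets F ((α → V) × (Fin k → V))) {x | φ.Realize x.1 x.2} := by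
  induction φ with
  | falsum => exact Set.eq_empty_of_forall_notMem (fun _ hx => hx) ▸ BoolComb.empty
  | @equal n t₁ t₂ =>
    let e := (LinearEquiv.sumArrowLequivProdArrow α (Fin n) F V).symm.toLinearMap
    obtain ⟨ℓ₁, c₁, h₁⟩ := h.exists_realize_eq t₁
    obtain ⟨ℓ₂, c₂, h₂⟩ := h.exists_realize_eq t₂
    have hset : {x : (α → V) × (Fin n → V) | (BoundedFormula.equal t₁ t₂).Realize x.1 x.2} =
        (fun x => ((ℓ₁ - ℓ₂) ∘ₗ e) x + (c₁ - c₂)) ⁻¹' {y | y - 0 ∈ (⊥ : Submodule F V)} := by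
      ext x
      simp only [Set.mem_ofPred_eq, Set.mem_preimage, BoundedFormula.Realize, h₁, h₂, sub_zero,
        Submodule.mem_bot, LinearMap.comp_apply, LinearMap.sub_apply]
      rw [show e x = Sum.elim x.1 x.2 from rfl, ← sub_eq_zero]
      exact iff_of_eq (congrArg (· = 0) (by abel))
    exact hset ▸ (BoolComb.basic (coset_mem_cosets _ _)).preimage_affine _ _
  | @rel n l R ts =>
    let e := (LinearEquiv.sumArrowLequivProdArrow α (Fin n) F V).symm.toLinearMap
    choose ℓ c hℓ using fun i => h.exists_realize_eq (ts i)
    have hset : {x : (α → V) × (Fin n → V) | (BoundedFormula.rel R ts).Realize x.1 x.2} =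
        (fun x => (LinearMap.pi ℓ ∘ₗ e) x + c) ⁻¹' {y | Structure.RelMap R y} := by
      ext x
      simp only [Set.mem_ofPred_eq, Set.mem_preimage, BoundedFormula.Realize, hℓ,
        LinearMap.comp_apply]
      rfl
    exact hset ▸ (BoolComb.basic (h.setOf_relMap_mem_cosets R)).preimage_affine _ _
  | @imp n φ ψ ihφ ihψ =>
    have hset : {x : (α → V) × (Fin n → V) | (φ.imp ψ).Realize x.1 x.2} =
        {x | φ.Realize x.1 x.2}ᶜ ∪ {x | ψ.Realize x.1 x.2} := by
      ext x
      simp [imp_iff_not_or]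
    exact hset ▸ ihφ.compl.union ihψ
  | @all n φ ih =>
    simpa [snocLinearMap] using (ih.preimage_linear (snocLinearMap F V α n)).setOf_forall

theorem IsAffineStructure.sum {L₁ L₂ : Lang} [L₁.Structure V] [L₂.Structure V]
    (h₁ : IsAffineStructure F L₁ V) (h₂ : IsAffineStructure F L₂ V) :
    IsAffineStructure F (L₁.sum L₂) V where
  funMap_affine f := by
    rcases f with f | f
    exacts [h₁.funMap_affine f, h₂.funMap_affine f]
  setOf_relMap_mem_cosets r := by
    rcases r with r | r
    exacts [h₁.setOf_relMap_mem_cosets r, h₂.setOf_relMap_mem_cosets r]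

theorem isAffineStructure_constantsOn {β : Type} [(constantsOn β).Structure V] :
    IsAffineStructure F (constantsOn β) V where
  funMap_affine {n} f := by
    cases n with
    | zero => exact ⟨0, Structure.funMap f default, fun x => by simp [Subsingleton.elim x default]⟩
    | succ n => exact f.elim
  setOf_relMap_mem_cosets r := r.elim

theorem IsAffineStructure.boolComb_of_definable (h : IsAffineStructure F L V) {A : Set V}
    {α : Type} {s : Set (α → V)} (hs : A.Definable L s) : BoolComb (cosets F (α → V)) s := by
  obtain ⟨φ, rfl⟩ := hs
  have hset : Set.ofPred φ.Realize =
      LinearMap.inl F (α → V) (Fin 0 → V) ⁻¹' {x | BoundedFormula.Realize φ x.1 x.2} := by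
    ext v
    change BoundedFormula.Realize φ v default ↔ BoundedFormula.Realize φ v 0
    rw [Subsingleton.elim (0 : Fin 0 → V) default]
  exact hset ▸ ((h.sum isAffineStructure_constantsOn).boolComb_setOf_realize φ).preimage_linear _

end Definable

section Instances

variable {F V : Type} [Field F] [AddCommGroup V] [Module F V]

theorem isAffineStructure_vecStructure :
    @IsAffineStructure F (vecLang F) V _ _ _ (vecStructure F V) := by
  let := vecStructure F V
  refine ⟨fun {n} f => ?_, fun r => r.elim⟩
  match n, f with
  | 0, _ => exact ⟨0, 0, fun _ => (zero_add _).symm⟩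
  | 1, c => exact ⟨(show F from c) • LinearMap.proj 0, 0, fun _ => (add_zero _).symm⟩
  | 2, _ => exact ⟨LinearMap.proj (R := F) (φ := fun _ => V) 0 + LinearMap.proj 1, 0,
      fun _ => (add_zero _).symm⟩
  | _ + 3, f => exact f.elim

theorem isAffineStructure_famStructure (ι : ℕ → Type) (W : ∀ n, ι n → Submodule F (Fin n → V)) :
    @IsAffineStructure F (famLang ι) V _ _ _ (famStructure ι W) :=
  let := famStructure ι W
  ⟨fun f => f.elim, fun r => submodule_mem_cosets (W _ r)⟩

end Instances

section CharZero

variable {F W : Type} [Field F] [AddCommGroup W] [Module F W]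

theorem finite_or_finite_compl_of_mem_cosets_self {S : Set F} (hS : S ∈ cosets F F) :
    S.Finite ∨ Sᶜ.Finite := by
  obtain ⟨U, v, rfl⟩ := hS
  rcases Ideal.eq_bot_or_top U with rfl | rfl
  · exact .inl (by simp [sub_eq_zero])
  · exact .inr (by simp)

theorem smul_mem_of_boolComb [CharZero F] {H : AddSubgroup W}
    (hH : BoolComb (cosets F W) (H : Set W)) (c : F) {x : W} (hx : x ∈ H) : c • x ∈ H := by
  let T := H.comap (LinearMap.toSpanSingleton F W x).toAddMonoidHom
  have hT : BoolComb (cosets F F) (T : Set F) :=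
    hH.preimage_linear (LinearMap.toSpanSingleton F W x)
  have hnat (n : ℕ) : (n : F) ∈ T := by simpa [T, Nat.cast_smul_eq_nsmul] using H.nsmul_mem hx n
  have hTinf : (T : Set F).Infinite := Set.infinite_of_injective_forall_mem Nat.cast_injective hnat
  have hTtop : T = ⊤ := T.eq_top_of_finite_compl
    ((hT.finite_or_finite_compl fun _ => finite_or_finite_compl_of_mem_cosets_self).resolve_left
      hTinf)
  have hc : c ∈ T := hTtop ▸ AddSubgroup.mem_top c
  simpa [T] using hc

end CharZero

/-- Let `F` be a field, `V` an `F`-vector space, and `𝔙` the expansion of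
`V` by predicates for a family of subspaces `W n r ≤ V^n`.  Then every `𝔙`-definable
subset of `V^n` is a boolean combination of affine subspaces (cosets of subspaces) of
`V^n`.  If moreover `F` has characteristic zero, every `𝔙`-definable subgroup of any
`V^n` is a subspace. -/
theorem statement18 (F V : Type) [Field F] [AddCommGroup V] [Module F V]
    (ι : ℕ → Type) (W : ∀ n, ι n → Submodule F (Fin n → V)) :
    (∀ (n : ℕ) (X : Set (Fin n → V)),
      @Dfn ((vecLang F).sum (famLang ι)) V
        (@Language.sumStructure (vecLang F) (famLang ι) V
          (vecStructure F V) (famStructure ι W)) _ X →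
      BoolComb {S : Set (Fin n → V) |
        ∃ (U : Submodule F (Fin n → V)) (v : Fin n → V), S = {x | x - v ∈ U}} X) ∧
    (CharZero F →
      ∀ (n : ℕ) (H : AddSubgroup (Fin n → V)),
        @Dfn ((vecLang F).sum (famLang ι)) V
          (@Language.sumStructure (vecLang F) (famLang ι) V
            (vecStructure F V) (famStructure ι W)) _ (H : Set (Fin n → V)) →
        ∃ U : Submodule F (Fin n → V), (H : Set (Fin n → V)) = ↑U) := by
  let := vecStructure F V
  let := famStructure ι W
  have hV := isAffineStructure_vecStructure.sum (isAffineStructure_famStructure ι W)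
  have hdef (n : ℕ) (X : Set (Fin n → V)) (hX : Dfn ((vecLang F).sum (famLang ι)) V X) :
      BoolComb (cosets F (Fin n → V)) X :=
    hV.boolComb_of_definable hX
  refine ⟨hdef, fun _ n H hH => ⟨{ H with smul_mem' := fun c _ hx => ?_ }, rfl⟩⟩
  exact smul_mem_of_boolComb (hdef n _ hH) c hx

end TracePaper
end
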